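/- arXiv:1811.04477 — 2 statements merged into one kernel-verified Lean document; each statement's English description precedes it below -/
import Mathlib

section
/- Let G be a unified chain graph (UCG) over a finite vertex set V and let p = N(0, Σ) be a Gaussian distribution on ℝ^V with Σ positive definite. Then p satisfies the local Markov property with respect to G if and only if it satisfies the pairwise Markov property with respect to G. -/
open Matrix MeasureTheory ProbabilityTheory

attribute [local instance] Classical.propDecidable

noncomputable section

variable {V : Type*}

/-- The submatrix of `S` with rows indexed by `X` and columns indexed by `Y`. -/
def msub (S : Matrix V V ℝ) (X Y : Finset V) : Matrix X Y ℝ :=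
  Matrix.of fun i j => S i.1 j.1

/-- Conditional independence `X ⊥ Y | Z` for a centered Gaussian distribution with
positive definite covariance matrix `S`:  `Σ_{X,Y} − Σ_{X,Z} (Σ_{Z,Z})⁻¹ Σ_{Z,Y} = 0`. -/
def gaussCI [Fintype V] [DecidableEq V] (S : Matrix V V ℝ) (X Y Z : Finset V) : Prop :=
  msub S X Y - msub S X Z * (msub S Z Z)⁻¹ * msub S Z Y = 0

/-- Pairwise disjointness of three sets. -/
def PDisj (X Y Z : Finset V) : Prop :=
  Disjoint X Y ∧ Disjoint X Z ∧ Disjoint Y Z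

/-- Pairwise disjointness of four sets. -/
def PDisj4 (X Y W Z : Finset V) : Prop :=
  Disjoint X Y ∧ Disjoint X W ∧ Disjoint X Z ∧ Disjoint Y W ∧ Disjoint Y Z ∧ Disjoint W Z

/-- A graph with three kinds of edges: undirected (`undir`), solid directed (`solid`,
written `A → B`) and dashed directed (`dashed`, written `A ⇢ B`).  No axioms are imposed. -/
structure PreGraph (V : Type*) where
  undir : V → V → Prop
  solid : V → V → Prop
  dashed : V → V → Prop

namespace PreGraph

variable (G : PreGraph V)

/-- There is an undirected edge between `a` and `b`. -/
def und (a b : V) : Prop := G.undir a b ∨ G.undir b a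

/-- `a` and `b` are adjacent. -/
def adj (a b : V) : Prop :=
  G.und a b ∨ G.solid a b ∨ G.solid b a ∨ G.dashed a b ∨ G.dashed b a

/-- The edge between `a` and `b` is undirected or directed (solid or dashed) from `a` to `b`. -/
def fwd (a b : V) : Prop := G.und a b ∨ G.solid a b ∨ G.dashed a b

/-- A route in `G`: a sequence of nodes `nodes 0, nodes 1, …, nodes len` such that
consecutive nodes are adjacent. -/
structure Route (G : PreGraph V) where
  len : ℕ
  nodes : ℕ → V
  adj_step : ∀ i < len, G.adj (nodes i) (nodes (i + 1))

/-- `c` is a collider node between `a` and `b`:  `a ⇢ c ⇠ b`, `a ⇢ c − b` (in either of the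
two traversal directions) or `a ⇢ c ← b` (in either of the two traversal directions). -/
def colliderTriple (a c b : V) : Prop :=
  (G.dashed a c ∧ G.dashed b c) ∨
  (G.dashed a c ∧ G.und c b) ∨ (G.und a c ∧ G.dashed b c) ∨
  (G.dashed a c ∧ G.solid b c) ∨ (G.solid a c ∧ G.dashed b c)

variable {G} in
/-- The node at position `k` of the route `ρ` is a collider node of `ρ`. -/
def Route.colliderNodeAt (ρ : G.Route) (k : ℕ) : Prop :=
  1 ≤ k ∧ k < ρ.len ∧ G.colliderTriple (ρ.nodes (k - 1)) (ρ.nodes k) (ρ.nodes (k + 1))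

variable {G} in
/-- The positions `p, …, q` of `ρ` form a collider section of `ρ`, i.e. a maximal undirected
subroute `C1 − ⋯ − Cn` of `ρ` such that `A → C1 − ⋯ − Cn ← B` is a subroute of `ρ`. -/
def Route.colliderSectionOcc (ρ : G.Route) (p q : ℕ) : Prop :=
  1 ≤ p ∧ p ≤ q ∧ q + 1 ≤ ρ.len ∧
  (∀ m, p ≤ m → m < q → G.und (ρ.nodes m) (ρ.nodes (m + 1))) ∧
  G.solid (ρ.nodes (p - 1)) (ρ.nodes p) ∧ G.solid (ρ.nodes (q + 1)) (ρ.nodes q)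

variable {G} in
/-- The node at position `k` of `ρ` lies in a collider section of `ρ`. -/
def Route.inColliderSectionAt (ρ : G.Route) (k : ℕ) : Prop :=
  ∃ p q, ρ.colliderSectionOcc p q ∧ p ≤ k ∧ k ≤ q

variable {G} in
/-- The route `ρ` is `Z`-open: (i) all collider nodes are in `Z`, (ii) every collider
section contains some node of `Z`, and (iii) every node which is neither a collider node
nor inside a collider section is outside `Z`. -/
def Route.IsZOpen (ρ : G.Route) (Z : Finset V) : Prop :=
  (∀ k, ρ.colliderNodeAt k → ρ.nodes k ∈ Z) ∧
  (∀ p q, ρ.colliderSectionOcc p q → ∃ m, p ≤ m ∧ m ≤ q ∧ ρ.nodes m ∈ Z) ∧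
  (∀ k ≤ ρ.len, ¬ ρ.colliderNodeAt k → ¬ ρ.inColliderSectionAt k → ρ.nodes k ∉ Z)

variable {G} in
/-- A pure collider route (with at least one edge): every intermediate node is a collider
node or lies in a collider section of the route. -/
def Route.IsPureCollider (ρ : G.Route) : Prop :=
  1 ≤ ρ.len ∧ ∀ k, 0 < k → k < ρ.len → ρ.colliderNodeAt k ∨ ρ.inColliderSectionAt k

/-- Separation `X ⊥_G Y | Z`: there is no `Z`-open route in `G` between a node of `X` and a
node of `Y`. -/
def Sep (X Y Z : Finset V) : Prop :=
  ¬ ∃ ρ : G.Route,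
      ((ρ.nodes 0 ∈ X ∧ ρ.nodes ρ.len ∈ Y) ∨ (ρ.nodes 0 ∈ Y ∧ ρ.nodes ρ.len ∈ X)) ∧
      ρ.IsZOpen Z

section Finite

variable [Fintype V] [DecidableEq V]

/-- The fathers of `X`: nodes `b` with `b → a` in `G` for some `a ∈ X`. -/
def fa (X : Finset V) : Finset V := Finset.univ.filter fun b => ∃ a ∈ X, G.solid b a

/-- The mothers of `X`: nodes `b` with `b ⇢ a` in `G` for some `a ∈ X`. -/
def mo (X : Finset V) : Finset V := Finset.univ.filter fun b => ∃ a ∈ X, G.dashed b a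

/-- The parents of `X`. -/
def pa (X : Finset V) : Finset V := G.fa X ∪ G.mo X

/-- The neighbors of `X`: nodes `b` with `b − a` in `G` for some `a ∈ X`. -/
def nb (X : Finset V) : Finset V := Finset.univ.filter fun b => ∃ a ∈ X, G.und b a

/-- There is a descending route from `a` to `b`: all edges undirected or directed in the
direction of travel, containing at least one directed edge. -/
def descends (a b : V) : Prop :=
  ∃ (n : ℕ) (f : ℕ → V), f 0 = a ∧ f n = b ∧ (∀ i < n, G.fwd (f i) (f (i + 1))) ∧
    ∃ i < n, G.solid (f i) (f (i + 1)) ∨ G.dashed (f i) (f (i + 1))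

/-- The non-descendants of `X`. -/
def nd (X : Finset V) : Finset V := Finset.univ.filter fun b => ¬ ∃ a ∈ X, G.descends a b

/-- Connectivity by undirected routes. -/
def uconn : V → V → Prop := Relation.ReflTransGen G.und

/-- The chain component containing `i`. -/
def cc (i : V) : Finset V := Finset.univ.filter fun j => G.uconn i j

/-- The set of chain components of `G`. -/
def ccs : Finset (Finset V) := Finset.univ.image G.cc

/-- The nodes incident to some edge of `G`. -/
def verts : Finset V := Finset.univ.filter fun a => ∃ b, G.adj a b

/-- `π` is a topological ordering of the chain components: it is constant on components and
increases along directed edges. -/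
def IsTopoOrder (π : V → ℕ) : Prop :=
  (∀ a b, G.uconn a b → π a = π b) ∧ ∀ a b, G.solid a b ∨ G.dashed a b → π a < π b

/-- Equation 1: for every topological ordering of the chain components, each component `K`
is independent of the preceding components minus `Pa(K)` given `Pa(K)`. -/
def eq1 (S : Matrix V V ℝ) : Prop :=
  ∀ π : V → ℕ, G.IsTopoOrder π → ∀ i : V,
    gaussCI S (G.cc i) ((Finset.univ.filter fun b => π b < π i) \ G.pa (G.cc i))
      (G.pa (G.cc i))

/-- The regression coefficients `β_K = Σ_{K,Pa(K)} (Σ_{Pa(K),Pa(K)})⁻¹`. -/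
def beta (S : Matrix V V ℝ) (K : Finset V) : Matrix K (G.pa K) ℝ :=
  msub S K (G.pa K) * (msub S (G.pa K) (G.pa K))⁻¹

/-- The conditional covariance matrix `Λ_K`. -/
def lam (S : Matrix V V ℝ) (K : Finset V) : Matrix K K ℝ :=
  msub S K K - msub S K (G.pa K) * (msub S (G.pa K) (G.pa K))⁻¹ * msub S (G.pa K) K

/-- The precision matrix `Ω = (Σ_{K ∪ Pa(K), K ∪ Pa(K)})⁻¹`. -/
def om (S : Matrix V V ℝ) (K : Finset V) : Matrix ↥(K ∪ G.pa K) ↥(K ∪ G.pa K) ℝ :=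
  (msub S (K ∪ G.pa K) (K ∪ G.pa K))⁻¹

/-- Equation 6: `(β_K)_{i,j} = 0` for all `i ∈ K` and `j ∈ Mo(K) ∖ Mo(i)`. -/
def eq6 (S : Matrix V V ℝ) : Prop :=
  ∀ K ∈ G.ccs, ∀ i (hi : i ∈ K), ∀ j (hj : j ∈ G.pa K),
    j ∈ G.mo K → j ∉ G.mo {i} → G.beta S K ⟨i, hi⟩ ⟨j, hj⟩ = 0

/-- Equation 7: `Ω_{i,j} = 0` for all `i ∈ K` and `j ∈ Fa(K) ∖ Fa(i)`. -/
def eq7 (S : Matrix V V ℝ) : Prop :=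
  ∀ K ∈ G.ccs, ∀ i (hi : i ∈ K), ∀ j (hj : j ∈ G.pa K),
    j ∈ G.fa K → j ∉ G.fa {i} →
    G.om S K ⟨i, Finset.mem_union_left _ hi⟩ ⟨j, Finset.mem_union_right _ hj⟩ = 0

/-- Equation 8: `(Λ_K⁻¹)_{i,j} = 0` for all `i ∈ K` and `j ∈ K ∖ ({i} ∪ Ne(i))`. -/
def eq8 (S : Matrix V V ℝ) : Prop :=
  ∀ K ∈ G.ccs, ∀ i (hi : i ∈ K), ∀ j (hj : j ∈ K),
    j ≠ i → j ∉ G.nb {i} → (G.lam S K)⁻¹ ⟨i, hi⟩ ⟨j, hj⟩ = 0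

/-- `p` satisfies Equation 1 and the zero restrictions of Equations 6–8 w.r.t. `G`. -/
def eqs (S : Matrix V V ℝ) : Prop := G.eq1 S ∧ G.eq6 S ∧ G.eq7 S ∧ G.eq8 S

/-- The global Markov property with respect to `G`, for an abstract ternary
(conditional-independence) relation `I`. -/
def globalMP (I : Finset V → Finset V → Finset V → Prop) : Prop :=
  ∀ X Y Z : Finset V, PDisj X Y Z → G.Sep X Y Z → I X Y Z

/-- The block-recursive Markov property (B1)–(B3) with respect to `G`. -/
def blockRecMP (I : Finset V → Finset V → Finset V → Prop) : Prop :=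
  ∀ K ∈ G.ccs, ∀ i ∈ K,
    I {i} (((G.nd K \ K) \ G.fa K) \ G.mo {i}) (G.fa K ∪ G.mo {i}) ∧
    I {i} (((G.nd K \ K) \ G.fa {i}) \ G.mo K) ((K \ {i}) ∪ G.fa {i} ∪ G.mo K) ∧
    ∀ j ∈ K, j ≠ i → j ∉ G.nb {i} → I {i} {j} ((K \ {i, j}) ∪ G.pa K)

/-- The pairwise Markov property (P1)–(P2) with respect to `G`. -/
def pairwiseMP (I : Finset V → Finset V → Finset V → Prop) : Prop :=
  ∀ i j : V, i ≠ j → ¬ G.adj i j → ∀ K ∈ G.ccs, i ∈ K →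
    (j ∈ ((G.nd {i} \ K) \ G.fa K) \ G.mo {i} → I {i} {j} ((G.nd {i} \ K) \ {j})) ∧
    (j ∈ ((G.nd {i} \ {i}) \ G.fa {i}) \ G.mo K → I {i} {j} (G.nd {i} \ {i, j}))

/-- The local Markov property (L1)–(L2) with respect to `G`. -/
def localMP (I : Finset V → Finset V → Finset V → Prop) : Prop :=
  ∀ K ∈ G.ccs, ∀ i ∈ K,
    I {i} (((G.nd {i} \ K) \ G.fa K) \ G.mo {i}) (G.fa K ∪ G.mo {i}) ∧
    I {i} ((((G.nd {i} \ {i}) \ G.pa {i}) \ G.nb {i}) \ G.mo (G.nb {i}))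
      (G.pa {i} ∪ G.nb {i} ∪ G.mo (G.nb {i}))

/-- The subgraph `G^U`: it keeps the edge `A ⊸ B` (with its type and orientation) iff `G`
has a route `A ⊸ B ⊸ ⋯ ⊸ C` with `C ∈ U`, all edges undirected or directed in the
direction of travel, and no subroute `R ⇢ S − T`. -/
def goodFrom (U : Finset V) (a b : V) : Prop :=
  ∃ (f : ℕ → V) (n : ℕ), 1 ≤ n ∧ f 0 = a ∧ f 1 = b ∧ f n ∈ U ∧
    (∀ i < n, G.fwd (f i) (f (i + 1))) ∧
    ∀ i, i + 2 ≤ n → ¬ (G.dashed (f i) (f (i + 1)) ∧ G.und (f (i + 1)) (f (i + 2)))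

/-- The graph `G^U`. -/
def derived (U : Finset V) : PreGraph V where
  undir a b := G.undir a b ∧ G.goodFrom U a b
  solid a b := G.solid a b ∧ G.goodFrom U a b
  dashed a b := G.dashed a b ∧ G.goodFrom U a b

/-- The set `Y'` used in Lemmas 2 and 3:
`Y' = {B' ∈ V(G^{X∪Y∪Z}) ∖ (X ∪ Z) : X ⊥_{G^{X∪Y∪Z}} B' | Z}`. -/
def derivedYp (X Y Z : Finset V) : Finset V :=
  ((G.derived (X ∪ Y ∪ Z)).verts \ (X ∪ Z)).filter fun b =>
    (G.derived (X ∪ Y ∪ Z)).Sep X {b} Z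

/-- The set `X' = V(G^{X∪Y∪Z}) ∖ (Y' ∪ Z)` used in Lemmas 2 and 3. -/
def derivedXp (X Y Z : Finset V) : Finset V :=
  (G.derived (X ∪ Y ∪ Z)).verts \ (G.derivedYp X Y Z ∪ Z)

end Finite

end PreGraph

/-- A chain graph: at most one edge between any pair of distinct nodes (undirected, solid
directed, or dashed directed) and no semidirected cycles. -/
structure ChainGraph (V : Type*) extends PreGraph V where
  undir_symm : ∀ a b, toPreGraph.undir a b → toPreGraph.undir b a
  undir_irrefl : ∀ a, ¬ toPreGraph.undir a a
  solid_irrefl : ∀ a, ¬ toPreGraph.solid a a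
  dashed_irrefl : ∀ a, ¬ toPreGraph.dashed a a
  undir_not_solid : ∀ a b, toPreGraph.undir a b → ¬ toPreGraph.solid a b
  undir_not_dashed : ∀ a b, toPreGraph.undir a b → ¬ toPreGraph.dashed a b
  solid_not_solid : ∀ a b, toPreGraph.solid a b → ¬ toPreGraph.solid b a
  solid_not_dashed : ∀ a b, toPreGraph.solid a b → ¬ toPreGraph.dashed a b
  solid_not_dashed_rev : ∀ a b, toPreGraph.solid a b → ¬ toPreGraph.dashed b a
  dashed_not_dashed : ∀ a b, toPreGraph.dashed a b → ¬ toPreGraph.dashed b a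
  no_semidirected_cycle : ¬ ∃ (f : ℕ → V) (n : ℕ), 1 ≤ n ∧ f n = f 0 ∧
    (toPreGraph.solid (f 0) (f 1) ∨ toPreGraph.dashed (f 0) (f 1)) ∧
    ∀ i < n, toPreGraph.fwd (f i) (f (i + 1))

namespace ChainGraph

variable (G : ChainGraph V)

/-- An LWF chain graph: no dashed directed edges. -/
def IsLWF : Prop := ∀ a b, ¬ G.toPreGraph.dashed a b

/-- An AMP chain graph: no solid directed edges. -/
def IsAMP : Prop := ∀ a b, ¬ G.toPreGraph.solid a b

/-- A unified chain graph: `Fa(K) ∩ Mo(K) = ∅` for every chain component `K`. -/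
def IsUCG [Fintype V] [DecidableEq V] : Prop :=
  ∀ K ∈ G.toPreGraph.ccs, Disjoint (G.toPreGraph.fa K) (G.toPreGraph.mo K)

end ChainGraph


/-- The AMP chain graph obtained from `G` by deleting every solid directed edge. -/
def ChainGraph.dropSolid (G : ChainGraph V) : ChainGraph V where
  undir := G.toPreGraph.undir
  solid _ _ := False
  dashed := G.toPreGraph.dashed
  undir_symm := G.undir_symm
  undir_irrefl := G.undir_irrefl
  solid_irrefl _ h := h
  dashed_irrefl := G.dashed_irrefl
  undir_not_solid _ _ _ h := h
  undir_not_dashed := G.undir_not_dashed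
  solid_not_solid _ _ h := h.elim
  solid_not_dashed _ _ h := h.elim
  solid_not_dashed_rev _ _ h := h.elim
  dashed_not_dashed := G.dashed_not_dashed
  no_semidirected_cycle := fun ⟨f, n, hn, hcyc, hstart, hsteps⟩ =>
    G.no_semidirected_cycle ⟨f, n, hn, hcyc, Or.inr (hstart.resolve_left id),
      fun i hi => (hsteps i hi).imp id (Or.imp False.elim id)⟩

/-- The restriction of `ω : V → ℝ` to the coordinates in `S`. -/
def marg (S : Finset V) : (V → ℝ) → (S → ℝ) := fun ω s => ω s.1

lemma marg_measurable (S : Finset V) : Measurable (marg (V := V) S) :=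
  measurable_pi_lambda _ fun s => measurable_pi_apply s.1

/-- Conditional independence of the coordinate tuples indexed by `X` and `Y` given the
coordinate tuple indexed by `Z`, for a distribution `μ` on `ℝ^V`. -/
def mCI [Fintype V] (μ : Measure (V → ℝ)) [IsFiniteMeasure μ] (X Y Z : Finset V) : Prop :=
  CondIndepFun (MeasurableSpace.comap (marg Z) inferInstance) ((marg_measurable Z).comap_le)
    (marg X) (marg Y) μ

/-- A probability distribution `μ` on `ℝ^V` satisfies the global Markov property with
respect to `G`. -/
def measGlobalMarkov [Fintype V] [DecidableEq V] (G : PreGraph V) (μ : Measure (V → ℝ))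
    [IsFiniteMeasure μ] : Prop :=
  ∀ X Y Z : Finset V, PDisj X Y Z → G.Sep X Y Z → mCI μ X Y Z

/-- A graphoid over `V`: a ternary relation on pairwise disjoint subsets of `V` satisfying
symmetry, decomposition, weak union, contraction and intersection. -/
structure Graphoid (V : Type*) [DecidableEq V] where
  rel : Finset V → Finset V → Finset V → Prop
  symmetry : ∀ X Y Z : Finset V, PDisj X Y Z → rel X Y Z → rel Y X Z
  decomposition : ∀ X Y W Z : Finset V, PDisj4 X Y W Z → rel X (Y ∪ W) Z → rel X Y Z
  weakUnion : ∀ X Y W Z : Finset V, PDisj4 X Y W Z → rel X (Y ∪ W) Z → rel X Y (Z ∪ W)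
  contraction : ∀ X Y W Z : Finset V, PDisj4 X Y W Z →
    rel X Y (Z ∪ W) → rel X W Z → rel X (Y ∪ W) Z
  intersection : ∀ X Y W Z : Finset V, PDisj4 X Y W Z →
    rel X Y (Z ∪ W) → rel X W (Z ∪ Y) → rel X (Y ∪ W) Z

/-- The conditional variance `Σ_{a,a|B} = Σ_{a,a} − Σ_{a,B} (Σ_{B,B})⁻¹ Σ_{B,a}`. -/
def condVar [Fintype V] [DecidableEq V] (S : Matrix V V ℝ) (a : V) (B : Finset V) : ℝ :=
  S a a - ∑ b₁ : B, ∑ b₂ : B, S a b₁.1 * (msub S B B)⁻¹ b₁ b₂ * S b₂.1 a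

/-!
For `X ~ N(0, S)` with `S` positive definite, `a ∉ N` and `B ⊆ N`, the statement
`a ⊥ B | N \ B` says exactly that the residual of the regression of `X a` on the coordinates
in `N` has no component along `B`. So it splits into the pairwise statements
`a ⊥ j | N \ {j}`, `j ∈ B`, and this alone gives (L1) ⇔ (P1) and (L2) ⇒ (P2).

For (P2) ⇒ (L2) the only pairs that (P2) does not cover are those where `j` is a mother of the
chain component `K` of `i`. Then (P2), applied to `i` and the children of `j` in `K`, removes
these children from the residual of `i`; and (P1), applied to `j` and each remaining node of
`K`, gives `i ⊥ j` given the rest. The UCG condition `Fa(K) ∩ Mo(K) = ∅` is what makes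
(P1) applicable to `j`.
-/

section PartialCovariance

variable [DecidableEq V] {S : Matrix V V ℝ} {C : Finset V}

/-- The coefficients of `X a - E[X a | X C]` in terms of the coordinates of `X ~ N(0, S)`, so that
`partialCov S C a b` below is the covariance of this residual with `X b`. -/
def regressionResidual (S : Matrix V V ℝ) (C : Finset V) (a : V) : V → ℝ :=
  Pi.single a 1 - ∑ c : C, ((fun c : C => S a c) ᵥ* (msub S C C)⁻¹) c • Pi.single (c : V) 1

lemma regressionResidual_apply_of_notMem (a : V) {v : V} (hv : v ∉ C) :
    regressionResidual S C a v = (Pi.single a 1 : V → ℝ) v := by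
  have : ∀ c : C, (c : V) ≠ v := fun c h => hv (h ▸ c.2)
  simp [regressionResidual, Finset.sum_apply, Pi.single_apply, this]

variable [Fintype V]

def partialCov (S : Matrix V V ℝ) (C : Finset V) (a b : V) : ℝ :=
  (regressionResidual S C a ᵥ* S) b

lemma partialCov_eq (C : Finset V) (a b : V) :
    partialCov S C a b =
      S a b - ∑ c : C, ((fun c : C => S a c) ᵥ* (msub S C C)⁻¹) c * S c b := by
  simp [partialCov, regressionResidual, Matrix.sub_vecMul, Matrix.sum_vecMul, Finset.sum_apply,
    Matrix.smul_vecMul]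

lemma partialCov_eq_zero_of_mem (hS : S.PosDef) (a : V) {c : V} (hc : c ∈ C) :
    partialCov S C a c = 0 := by
  have hM : IsUnit (msub S C C).det :=
    (Matrix.isUnit_iff_isUnit_det _).mp (hS.submatrix Subtype.val_injective).isUnit
  have key :
      ((fun c : C => S a c) ᵥ* (msub S C C)⁻¹) ᵥ* msub S C C = fun c : C => S a c := by
    rw [Matrix.vecMul_vecMul, Matrix.nonsing_inv_mul _ hM, Matrix.vecMul_one]
  rw [partialCov_eq, sub_eq_zero]
  simpa [Matrix.vecMul, dotProduct, msub] using (congrFun key ⟨c, hc⟩).symm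

lemma eq_regressionResidual (hS : S.PosDef) {a : V} {q : V → ℝ}
    (hq : ∀ v ∉ C, q v = (Pi.single a 1 : V → ℝ) v)
    (horth : ∀ c ∈ C, (q ᵥ* S) c = 0) :
    q = regressionResidual S C a := by
  set d := q - regressionResidual S C a
  have hd : ∀ v, (d ᵥ* S) v * d v = 0 := by
    intro v
    by_cases hv : v ∈ C
    · have h := partialCov_eq_zero_of_mem hS a hv
      rw [partialCov] at h
      simp [d, Matrix.sub_vecMul, horth v hv, h]
    · simp [d, hq v hv, regressionResidual_apply_of_notMem a hv]
  by_contra hne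
  have := hS.dotProduct_mulVec_pos (sub_ne_zero.mpr hne)
  rw [star_trivial, Matrix.dotProduct_mulVec, dotProduct, Finset.sum_eq_zero (fun v _ => hd v)]
    at this
  exact lt_irrefl _ this

lemma partialCov_eq_dotProduct (hS : S.PosDef) (a b : V) :
    partialCov S C a b = regressionResidual S C a ⬝ᵥ (S *ᵥ regressionResidual S C b) := by
  have hoff : (regressionResidual S C a ᵥ* S) ⬝ᵥ
      (regressionResidual S C b - Pi.single b 1) = 0 := by
    refine Finset.sum_eq_zero fun v _ => ?_
    by_cases hv : v ∈ C
    · rw [← partialCov, partialCov_eq_zero_of_mem hS a hv, zero_mul]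
    · simp [regressionResidual_apply_of_notMem b hv]
  rw [Matrix.dotProduct_mulVec, ← sub_add_cancel (regressionResidual S C b) (Pi.single b 1),
    dotProduct_add, hoff, zero_add, dotProduct_single, mul_one, partialCov]

lemma partialCov_comm (hS : S.PosDef) (a b : V) : partialCov S C a b = partialCov S C b a := by
  have hSt : Sᵀ = S := by simpa using hS.1.eq
  rw [partialCov_eq_dotProduct hS, partialCov_eq_dotProduct hS, dotProduct_comm,
    Matrix.dotProduct_mulVec, ← Matrix.mulVec_transpose, hSt]

lemma regressionResidual_eq_of_partialCov_eq_zero (hS : S.PosDef) {a : V} {D N : Finset V}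
    (hDN : D ⊆ N) (h : ∀ j ∈ N, partialCov S D a j = 0) :
    regressionResidual S D a = regressionResidual S N a :=
  eq_regressionResidual hS
    (fun _ hv => regressionResidual_apply_of_notMem a (fun hvD => hv (hDN hvD))) h

lemma regressionResidual_eq_of_apply_eq_zero (hS : S.PosDef) {a : V} {D N : Finset V}
    (hDN : D ⊆ N) (ha : a ∉ N) (h : ∀ j ∈ N, j ∉ D → regressionResidual S N a j = 0) :
    regressionResidual S N a = regressionResidual S D a := by
  refine eq_regressionResidual hS (fun v hv => ?_)
    (fun c hc => partialCov_eq_zero_of_mem hS a (hDN hc))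
  by_cases hvN : v ∈ N
  · rw [h v hvN hv, Pi.single_eq_of_ne (fun hva : v = a => ha (hva ▸ hvN))]
  · exact regressionResidual_apply_of_notMem a hvN

lemma forall_partialCov_sdiff_eq_zero_iff (hS : S.PosDef) {a : V} {B N : Finset V}
    (ha : a ∉ N) (hB : B ⊆ N) :
    (∀ j ∈ B, partialCov S (N \ B) a j = 0) ↔
      ∀ j ∈ B, regressionResidual S N a j = 0 := by
  constructor
  · intro h j hj
    have hres : regressionResidual S (N \ B) a = regressionResidual S N a :=
      regressionResidual_eq_of_partialCov_eq_zero hS Finset.sdiff_subset fun k hk => by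
        by_cases hkB : k ∈ B
        · exact h k hkB
        · exact partialCov_eq_zero_of_mem hS a (Finset.mem_sdiff.mpr ⟨hk, hkB⟩)
    have hjNB : j ∉ N \ B := fun hj' => (Finset.mem_sdiff.mp hj').2 hj
    rw [← hres, regressionResidual_apply_of_notMem a hjNB,
      Pi.single_eq_of_ne (fun hja : j = a => ha (hja ▸ hB hj))]
  · intro h j hj
    have hres : regressionResidual S N a = regressionResidual S (N \ B) a :=
      regressionResidual_eq_of_apply_eq_zero hS Finset.sdiff_subset ha fun k hk hkNB =>
        h k (by simpa [hk] using hkNB)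
    rw [partialCov, ← hres, ← partialCov, partialCov_eq_zero_of_mem hS a (hB hj)]

lemma partialCov_sdiff_singleton_eq_zero_iff (hS : S.PosDef) {a j : V} {N : Finset V}
    (ha : a ∉ N) (hj : j ∈ N) :
    partialCov S (N \ {j}) a j = 0 ↔ regressionResidual S N a j = 0 := by
  simpa using forall_partialCov_sdiff_eq_zero_iff hS ha (Finset.singleton_subset_iff.mpr hj)

lemma gaussCI_singleton_iff (a : V) (B C : Finset V) :
    gaussCI S {a} B C ↔ ∀ b ∈ B, partialCov S C a b = 0 := by
  have entry : ∀ (p : ({a} : Finset V)) (q : B),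
      (msub S {a} B - msub S {a} C * (msub S C C)⁻¹ * msub S C B) p q = partialCov S C a q := by
    rintro ⟨p, hp⟩ q
    obtain rfl := Finset.mem_singleton.mp hp
    simp [partialCov_eq, Matrix.mul_apply, Matrix.vecMul, dotProduct, msub]
  refine ⟨fun h b hb => ?_, fun h => funext fun p => funext fun q => ?_⟩
  · rw [← entry ⟨a, Finset.mem_singleton_self a⟩ ⟨b, hb⟩, h]; rfl
  · rw [entry, h q q.2]; rfl

lemma gaussCI_singleton_singleton_iff (a b : V) (C : Finset V) :
    gaussCI S {a} {b} C ↔ partialCov S C a b = 0 := by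
  simp [gaussCI_singleton_iff]

lemma gaussCI_iff_forall_singleton (hS : S.PosDef) {a : V} {N Z : Finset V}
    (ha : a ∉ N) (hZ : Z ⊆ N) :
    gaussCI S {a} (N \ Z) Z ↔ ∀ j ∈ N \ Z, gaussCI S {a} {j} (N \ {j}) := by
  have hblock := forall_partialCov_sdiff_eq_zero_iff hS ha (B := N \ Z) Finset.sdiff_subset
  rw [Finset.sdiff_sdiff_eq_self hZ] at hblock
  simp only [gaussCI_singleton_iff, Finset.mem_singleton, forall_eq, hblock]
  exact forall₂_congr fun j hj =>
    (partialCov_sdiff_singleton_eq_zero_iff hS ha (Finset.sdiff_subset hj)).symm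

end PartialCovariance

lemma sdiff_pair_eq_sdiff_sdiff [DecidableEq V] (s : Finset V) (a b : V) :
    s \ {a, b} = (s \ {a}) \ {b} := by
  ext; simp [not_or, and_assoc]

open Relation

lemma reflTransGen_of_chain {α : Type*} {r : α → α → Prop} {f : ℕ → α} {n s t : ℕ}
    (hf : ∀ k < n, r (f k) (f (k + 1))) (hst : s ≤ t) (htn : t ≤ n) :
    ReflTransGen r (f s) (f t) :=
  ReflTransGen.lift f (fun _ _ h => h) _ _ <|
    reflTransGen_of_succ_of_le (fun k l => r (f k) (f l))
      (fun k hk => hf k (hk.2.trans_le htn)) hst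

lemma exists_chain_of_reflTransGen {α : Type*} {r : α → α → Prop} {a b : α}
    (h : ReflTransGen r a b) :
    ∃ (n : ℕ) (f : ℕ → α), f 0 = a ∧ f n = b ∧ ∀ k < n, r (f k) (f (k + 1)) := by
  induction h using ReflTransGen.head_induction_on with
  | refl => exact ⟨0, fun _ => b, rfl, rfl, by simp⟩
  | head hac _ ih =>
    obtain ⟨n, f, hf0, hfn, hf⟩ := ih
    refine ⟨n + 1, fun | 0 => _ | k + 1 => f k, rfl, hfn, fun k hk => ?_⟩
    cases k with
    | zero => simpa [hf0] using hac
    | succ k => exact hf k (by omega)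

namespace PreGraph

variable {G : PreGraph V} {a b x y : V}

lemma descends_of_dir_of_reflTransGen (hxy : G.solid x y ∨ G.dashed x y)
    (hyb : ReflTransGen G.fwd y b) : G.descends x b := by
  obtain ⟨n, f, hf0, hfn, hf⟩ := exists_chain_of_reflTransGen hyb
  refine ⟨n + 1, fun | 0 => x | k + 1 => f k, rfl, hfn, fun k hk => ?_, 0, by omega, ?_⟩
  · cases k with
    | zero => simpa [hf0, fwd] using Or.inr hxy
    | succ k => exact hf k (by omega)
  · simpa [hf0] using hxy

lemma descends_of_fwd (hax : G.fwd a x) (hxb : G.descends x b) : G.descends a b := by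
  obtain ⟨n, f, hf0, hfn, hf, s, hs, hdir⟩ := hxb
  refine ⟨n + 1, fun | 0 => a | k + 1 => f k, rfl, hfn, fun k hk => ?_, s + 1, by omega, hdir⟩
  cases k with
  | zero => simpa [hf0] using hax
  | succ k => exact hf k (by omega)

lemma descends_iff : G.descends a b ↔ ∃ x y,
    ReflTransGen G.fwd a x ∧ (G.solid x y ∨ G.dashed x y) ∧ ReflTransGen G.fwd y b := by
  constructor
  · rintro ⟨n, f, rfl, rfl, hf, s, hs, hdir⟩
    exact ⟨f s, f (s + 1), reflTransGen_of_chain hf (Nat.zero_le s) hs.le, hdir,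
      reflTransGen_of_chain hf (by omega) le_rfl⟩
  · rintro ⟨x, y, hax, hxy, hyb⟩
    induction hax using ReflTransGen.head_induction_on with
    | refl => exact descends_of_dir_of_reflTransGen hxy hyb
    | head hac _ ih => exact descends_of_fwd hac ih

variable [Fintype V] {X Y : Finset V}

@[simp] lemma mem_fa : b ∈ G.fa X ↔ ∃ a ∈ X, G.solid b a := by simp [fa]
@[simp] lemma mem_mo : b ∈ G.mo X ↔ ∃ a ∈ X, G.dashed b a := by simp [mo]
@[simp] lemma mem_nb : b ∈ G.nb X ↔ ∃ a ∈ X, G.und b a := by simp [nb]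
@[simp] lemma mem_nd_singleton : b ∈ G.nd {a} ↔ ¬ G.descends a b := by simp [nd]

lemma fa_mono (h : X ⊆ Y) : G.fa X ⊆ G.fa Y := by
  intro b; simp only [mem_fa]; exact fun ⟨a, ha, hba⟩ => ⟨a, h ha, hba⟩

lemma mo_mono (h : X ⊆ Y) : G.mo X ⊆ G.mo Y := by
  intro b; simp only [mem_mo]; exact fun ⟨a, ha, hba⟩ => ⟨a, h ha, hba⟩

end PreGraph

namespace ChainGraph

variable {G : ChainGraph V} {a b c x y : V}

lemma not_reflTransGen_fwd_of_dir (hxy : G.solid x y ∨ G.dashed x y) :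
    ¬ ReflTransGen G.fwd y x := by
  intro hyx
  obtain ⟨n, f, hf0, hfn, hf⟩ := exists_chain_of_reflTransGen hyx
  refine G.no_semidirected_cycle ⟨fun | 0 => x | k + 1 => f k, n + 1, by omega, hfn,
    by simpa [hf0] using hxy, fun k hk => ?_⟩
  cases k with
  | zero => simpa [hf0, PreGraph.fwd] using Or.inr hxy
  | succ k => exact hf k (by omega)

lemma not_descends_of_reflTransGen_fwd (h : ReflTransGen G.fwd b a) : ¬ G.descends a b := by
  rw [PreGraph.descends_iff]
  rintro ⟨x, y, hax, hxy, hyb⟩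
  exact not_reflTransGen_fwd_of_dir hxy (hyb.trans (h.trans hax))

lemma uconn_symm (h : G.uconn a b) : G.uconn b a :=
  ReflTransGen.mono (fun _ _ => Or.symm) _ _ (ReflTransGen.swap _ _ h)

lemma reflTransGen_fwd_of_uconn (h : G.uconn a b) : ReflTransGen G.fwd a b :=
  ReflTransGen.mono (fun _ _ => Or.inl) _ _ h

lemma descends_congr (h : G.uconn a c) : G.descends a b ↔ G.descends c b := by
  have prepend : ∀ {a c}, G.uconn a c → G.descends c b → G.descends a b := fun hac hcb => by
    obtain ⟨x, y, hcx, hxy, hyb⟩ := PreGraph.descends_iff.mp hcb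
    exact PreGraph.descends_iff.mpr ⟨x, y, (reflTransGen_fwd_of_uconn hac).trans hcx, hxy, hyb⟩
  exact ⟨prepend (uconn_symm h), prepend h⟩

variable [Fintype V] [DecidableEq V] {K : Finset V} {i j : V}

lemma mem_iff_uconn (hK : K ∈ G.ccs) (hi : i ∈ K) : b ∈ K ↔ G.uconn i b := by
  obtain ⟨x, -, rfl⟩ := Finset.mem_image.mp hK
  simp only [PreGraph.cc, Finset.mem_filter, Finset.mem_univ, true_and] at hi ⊢
  exact ⟨fun hb => (uconn_symm hi).trans hb, fun hb => hi.trans hb⟩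

lemma subset_nd (hK : K ∈ G.ccs) (hi : i ∈ K) : K ⊆ G.nd {i} := fun _ hk =>
  PreGraph.mem_nd_singleton.mpr <| not_descends_of_reflTransGen_fwd <|
    reflTransGen_fwd_of_uconn <| uconn_symm <| (mem_iff_uconn hK hi).mp hk

lemma nd_eq (hK : K ∈ G.ccs) (hi : i ∈ K) (ha : a ∈ K) : G.nd {a} = G.nd {i} := by
  ext b
  simp only [PreGraph.mem_nd_singleton, descends_congr ((mem_iff_uconn hK hi).mp ha)]

lemma mem_nd_sdiff_of_dir (hK : K ∈ G.ccs) (hi : i ∈ K) (ha : a ∈ K)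
    (hba : G.solid b a ∨ G.dashed b a) : b ∈ G.nd {i} \ K := by
  have hai := uconn_symm ((mem_iff_uconn hK hi).mp ha)
  refine Finset.mem_sdiff.mpr ⟨PreGraph.mem_nd_singleton.mpr <|
    not_descends_of_reflTransGen_fwd <|
      ReflTransGen.head (Or.inr hba) (reflTransGen_fwd_of_uconn hai), fun hb => ?_⟩
  exact not_reflTransGen_fwd_of_dir hba <|
    reflTransGen_fwd_of_uconn (hai.trans ((mem_iff_uconn hK hi).mp hb))

lemma not_dir_of_mem_nd (hK : K ∈ G.ccs) (hi : i ∈ K) (ha : a ∈ K) (hb : b ∈ G.nd {i}) :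
    ¬ (G.solid a b ∨ G.dashed a b) := fun hab =>
  PreGraph.mem_nd_singleton.mp hb <| PreGraph.descends_iff.mpr
    ⟨a, b, reflTransGen_fwd_of_uconn ((mem_iff_uconn hK hi).mp ha), hab, ReflTransGen.refl⟩

lemma mem_of_und (hK : K ∈ G.ccs) (hi : i ∈ K) (ha : a ∈ K) (hab : G.und a b) : b ∈ K :=
  (mem_iff_uconn hK hi).mpr (((mem_iff_uconn hK hi).mp ha).tail hab)

lemma fa_subset (hK : K ∈ G.ccs) (hi : i ∈ K) : G.fa K ⊆ G.nd {i} \ K := fun _ hb => by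
  obtain ⟨a, ha, hba⟩ := PreGraph.mem_fa.mp hb
  exact mem_nd_sdiff_of_dir hK hi ha (Or.inl hba)

lemma mo_subset (hK : K ∈ G.ccs) (hi : i ∈ K) : G.mo K ⊆ G.nd {i} \ K := fun _ hb => by
  obtain ⟨a, ha, hba⟩ := PreGraph.mem_mo.mp hb
  exact mem_nd_sdiff_of_dir hK hi ha (Or.inr hba)

lemma nb_subset (hK : K ∈ G.ccs) (hi : i ∈ K) : G.nb {i} ⊆ K := fun _ hb => by
  simp only [PreGraph.mem_nb, Finset.mem_singleton, exists_eq_left] at hb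
  exact mem_of_und hK hi hi hb.symm

lemma not_adj_of_mem_nd (hK : K ∈ G.ccs) (hi : i ∈ K) (ha : a ∈ K) (hb : b ∈ G.nd {i})
    (hu : ¬ G.und a b) (hs : ¬ G.solid b a) (hd : ¬ G.dashed b a) : ¬ G.adj a b := by
  rintro (h | h | h | h | h)
  exacts [hu h, not_dir_of_mem_nd hK hi ha hb (Or.inl h), hs h,
    not_dir_of_mem_nd hK hi ha hb (Or.inr h), hd h]

variable {S : Matrix V V ℝ}

lemma local1_iff_pairwise1 (hS : S.PosDef) (hK : K ∈ G.ccs) (hi : i ∈ K) :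
    gaussCI S {i} (((G.nd {i} \ K) \ G.fa K) \ G.mo {i}) (G.fa K ∪ G.mo {i}) ↔
      ∀ j, i ≠ j → ¬ G.adj i j → j ∈ ((G.nd {i} \ K) \ G.fa K) \ G.mo {i} →
        gaussCI S {i} {j} ((G.nd {i} \ K) \ {j}) := by
  have hZ : G.fa K ∪ G.mo {i} ⊆ G.nd {i} \ K := Finset.union_subset (fa_subset hK hi)
    ((PreGraph.mo_mono (Finset.singleton_subset_iff.mpr hi)).trans (mo_subset hK hi))
  have hB : ((G.nd {i} \ K) \ G.fa K) \ G.mo {i} = (G.nd {i} \ K) \ (G.fa K ∪ G.mo {i}) :=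
    sdiff_sdiff_left
  rw [hB, gaussCI_iff_forall_singleton hS (by simp [hi]) hZ]
  refine ⟨fun h j _ _ hj => h j hj, fun h j hj => h j ?_ ?_ hj⟩
  all_goals
    simp only [Finset.mem_sdiff, Finset.mem_union, PreGraph.mem_fa, PreGraph.mem_mo,
      Finset.mem_singleton, exists_eq_left, not_or] at hj
    obtain ⟨⟨hjN, hjK⟩, hjfa, hjmo⟩ := hj
  · exact fun hij => hjK (hij ▸ hi)
  · exact not_adj_of_mem_nd hK hi hi hjN (fun hu => hjK (mem_of_und hK hi hi hu))
      (fun hs => hjfa ⟨i, hi, hs⟩) hjmo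

lemma local2_iff_forall_singleton (hS : S.PosDef) (hK : K ∈ G.ccs) (hi : i ∈ K) :
    gaussCI S {i} ((((G.nd {i} \ {i}) \ G.pa {i}) \ G.nb {i}) \ G.mo (G.nb {i}))
        (G.pa {i} ∪ G.nb {i} ∪ G.mo (G.nb {i})) ↔
      ∀ j ∈ (((G.nd {i} \ {i}) \ G.pa {i}) \ G.nb {i}) \ G.mo (G.nb {i}),
        gaussCI S {i} {j} (G.nd {i} \ {i, j}) := by
  have hiK := Finset.singleton_subset_iff.mpr hi
  have hnd : G.nd {i} \ K ⊆ G.nd {i} \ {i} := Finset.sdiff_subset_sdiff le_rfl hiK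
  have hpa : G.pa {i} ⊆ G.nd {i} \ {i} := Finset.union_subset
    ((PreGraph.fa_mono hiK).trans ((fa_subset hK hi).trans hnd))
    ((PreGraph.mo_mono hiK).trans ((mo_subset hK hi).trans hnd))
  have hnb : G.nb {i} ⊆ G.nd {i} \ {i} := fun b hb => by
    refine Finset.mem_sdiff.mpr ⟨subset_nd hK hi (nb_subset hK hi hb), fun hbi => ?_⟩
    simp only [PreGraph.mem_nb, Finset.mem_singleton, exists_eq_left] at hb
    rw [Finset.mem_singleton.mp hbi] at hb
    rcases hb with h | h <;> exact G.undir_irrefl i h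
  have hmonb : G.mo (G.nb {i}) ⊆ G.nd {i} \ {i} :=
    (PreGraph.mo_mono (nb_subset hK hi)).trans ((mo_subset hK hi).trans hnd)
  have hB : (((G.nd {i} \ {i}) \ G.pa {i}) \ G.nb {i}) \ G.mo (G.nb {i}) =
      (G.nd {i} \ {i}) \ (G.pa {i} ∪ G.nb {i} ∪ G.mo (G.nb {i})) := by
    ext; simp only [Finset.mem_sdiff, Finset.mem_union]; tauto
  rw [hB, gaussCI_iff_forall_singleton hS (by simp)
    (Finset.union_subset (Finset.union_subset hpa hnb) hmonb)]
  simp only [sdiff_pair_eq_sdiff_sdiff]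

lemma mem_local2_of_pairwise2 (hK : K ∈ G.ccs) (hi : i ∈ K) (hadj : ¬ G.adj i j)
    (hj : j ∈ ((G.nd {i} \ {i}) \ G.fa {i}) \ G.mo K) :
    j ∈ (((G.nd {i} \ {i}) \ G.pa {i}) \ G.nb {i}) \ G.mo (G.nb {i}) := by
  have hmoi := PreGraph.mo_mono (G := G.toPreGraph) (Finset.singleton_subset_iff.mpr hi)
  have hmonb := PreGraph.mo_mono (G := G.toPreGraph) (nb_subset hK hi)
  simp only [Finset.mem_sdiff, PreGraph.pa, Finset.mem_union, not_or] at hj ⊢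
  refine ⟨⟨⟨hj.1.1, hj.1.2, fun h => hj.2 (hmoi h)⟩, fun h => hadj ?_⟩,
    fun h => hj.2 (hmonb h)⟩
  simp only [PreGraph.mem_nb, Finset.mem_singleton, exists_eq_left] at h
  exact Or.inl h.symm

lemma regressionResidual_eq_zero_of_pairwise2 (hS : S.PosDef)
    (hpw : G.pairwiseMP (gaussCI S)) (hK : K ∈ G.ccs) (hi : i ∈ K) {h : V} (hh : h ∈ K)
    (hhi : h ≠ i) (hhnb : ¬ G.und h i) :
    regressionResidual S (G.nd {i} \ {i}) i h = 0 := by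
  have hhN : h ∈ G.nd {i} := subset_nd hK hi hh
  have hpar : ∀ {a}, a ∈ K → ¬ (G.solid h a ∨ G.dashed h a) := fun ha hdir =>
    (Finset.mem_sdiff.mp (mem_nd_sdiff_of_dir hK hi ha hdir)).2 hh
  have hP := (hpw i h hhi.symm (not_adj_of_mem_nd hK hi hi hhN (fun hu => hhnb hu.symm)
    (fun hs => hpar hi (Or.inl hs)) (fun hd => hpar hi (Or.inr hd))) K hK hi).2
  rw [gaussCI_singleton_singleton_iff, sdiff_pair_eq_sdiff_sdiff,
    partialCov_sdiff_singleton_eq_zero_iff hS (by simp) (by simp [hhN, hhi])] at hP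
  exact hP (by
    simpa [hhN, hhi] using ⟨fun hs => hpar hi (Or.inl hs), fun a ha hd => hpar ha (Or.inr hd)⟩)

lemma partialCov_eq_zero_of_pairwise1 (hS : S.PosDef) (hpw : G.pairwiseMP (gaussCI S))
    (hK : K ∈ G.ccs) (hi : i ∈ K) (hjN : j ∈ G.nd {i}) (hjK : j ∉ K) (hjfa : j ∉ G.fa K)
    (hji : ¬ G.dashed j i) :
    partialCov S (((G.nd {i} \ {i}) \ K.filter (G.dashed j ·)) \ {j}) i j = 0 := by
  set ch := K.filter (G.dashed j ·)
  set M := (G.nd {i} \ {j}) \ ch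
  have hjM : j ∉ M := by simp [M]
  have hKM : K \ ch ⊆ M := fun a ha => by
    have haK := (Finset.mem_sdiff.mp ha).1
    simp only [M, Finset.mem_sdiff, Finset.mem_singleton]
    exact ⟨⟨subset_nd hK hi haK, fun haj => hjK (haj ▸ haK)⟩, (Finset.mem_sdiff.mp ha).2⟩
  have hMK : M \ (K \ ch) = (G.nd {i} \ K) \ {j} := by
    ext x; simp only [M, ch, Finset.mem_sdiff, Finset.mem_singleton, Finset.mem_filter]; tauto
  have hP1 : ∀ a ∈ K \ ch, partialCov S (M \ (K \ ch)) j a = 0 := fun a ha => by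
    have haK := (Finset.mem_sdiff.mp ha).1
    have hja : ¬ G.dashed j a := fun h => (Finset.mem_sdiff.mp ha).2 (by simp [ch, haK, h])
    have hadj := not_adj_of_mem_nd hK hi haK hjN (fun hu => hjK (mem_of_und hK hi haK hu))
      (fun hs => hjfa (PreGraph.mem_fa.mpr ⟨a, haK, hs⟩)) hja
    have hP := (hpw a j (fun haj => hjK (haj ▸ haK)) hadj K hK haK).1
    rw [nd_eq hK hi haK, gaussCI_singleton_singleton_iff, partialCov_comm hS] at hP
    rw [hMK]
    exact hP (by simp [hjN, hjK, hjfa, hja])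
  have hiKch : i ∈ K \ ch := by simp [ch, hi, hji]
  have hres := (forall_partialCov_sdiff_eq_zero_iff hS hjM hKM).mp hP1 i hiKch
  rw [← partialCov_sdiff_singleton_eq_zero_iff hS hjM (hKM hiKch), partialCov_comm hS] at hres
  have hMi : M \ {i} = ((G.nd {i} \ {i}) \ ch) \ {j} := by
    ext x; simp only [M, Finset.mem_sdiff, Finset.mem_singleton]; tauto
  rwa [hMi] at hres

lemma pairwise2_of_mem_mo (hG : G.IsUCG) (hS : S.PosDef) (hpw : G.pairwiseMP (gaussCI S))
    (hK : K ∈ G.ccs) (hi : i ∈ K) (hjN : j ∈ G.nd {i}) (hjmo : j ∈ G.mo K)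
    (hji : ¬ G.dashed j i) (hjnb : j ∉ G.mo (G.nb {i})) :
    gaussCI S {i} {j} (G.nd {i} \ {i, j}) := by
  set ch := K.filter (G.dashed j ·)
  have hjK : j ∉ K := (Finset.mem_sdiff.mp (mo_subset hK hi hjmo)).2
  have hjfa : j ∉ G.fa K := Finset.disjoint_right.mp (hG K hK) hjmo
  have hjN2 : j ∈ (G.nd {i} \ {i}) \ ch := by
    have hne : j ≠ i := fun h => hjK (h ▸ hi)
    simp [ch, hjN, hjK, hne]
  have hres : regressionResidual S (G.nd {i} \ {i}) i =
      regressionResidual S ((G.nd {i} \ {i}) \ ch) i := by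
    refine regressionResidual_eq_of_apply_eq_zero hS Finset.sdiff_subset (by simp)
      fun h hh hch => ?_
    obtain ⟨hhK, hjh⟩ := Finset.mem_filter.mp (by simpa [hh] using hch : h ∈ ch)
    refine regressionResidual_eq_zero_of_pairwise2 hS hpw hK hi hhK
      (fun hhi => hji (hhi ▸ hjh)) fun hu => hjnb ?_
    exact PreGraph.mem_mo.mpr
      ⟨h, PreGraph.mem_nb.mpr ⟨i, Finset.mem_singleton_self i, hu⟩, hjh⟩
  rw [gaussCI_singleton_singleton_iff, sdiff_pair_eq_sdiff_sdiff,
    partialCov_sdiff_singleton_eq_zero_iff hS (by simp) (Finset.sdiff_subset hjN2), hres,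
    ← partialCov_sdiff_singleton_eq_zero_iff hS (by simp) hjN2]
  exact partialCov_eq_zero_of_pairwise1 hS hpw hK hi hjN hjK hjfa hji

lemma local2_of_pairwise (hG : G.IsUCG) (hS : S.PosDef) (hpw : G.pairwiseMP (gaussCI S))
    (hK : K ∈ G.ccs) (hi : i ∈ K) :
    ∀ j ∈ (((G.nd {i} \ {i}) \ G.pa {i}) \ G.nb {i}) \ G.mo (G.nb {i}),
      gaussCI S {i} {j} (G.nd {i} \ {i, j}) := by
  intro j hj
  simp only [Finset.mem_sdiff, PreGraph.pa, Finset.mem_union, PreGraph.mem_fa, PreGraph.mem_mo,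
    PreGraph.mem_nb, Finset.mem_singleton, exists_eq_left, not_or] at hj
  obtain ⟨⟨⟨⟨hjN, hji⟩, hjfa, hjmo⟩, hjnb⟩, hjmonb⟩ := hj
  by_cases hjK : j ∈ G.mo K
  · exact pairwise2_of_mem_mo hG hS hpw hK hi hjN hjK hjmo (by simpa using hjmonb)
  · have hadj := not_adj_of_mem_nd hK hi hi hjN (fun hu => hjnb hu.symm) hjfa hjmo
    exact (hpw i j (Ne.symm hji) hadj K hK hi).2 (by simp [hjN, hji, hjfa, hjK])

end ChainGraph

/-- **Theorem 6.** The local and pairwise Markov properties with respect to a UCG are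
equivalent for Gaussian distributions. -/
theorem local_iff_pairwise_for_gaussians
    {V : Type*} [Fintype V] [DecidableEq V] (G : ChainGraph V) (hG : G.IsUCG)
    (S : Matrix V V ℝ) (hS : S.PosDef) :
    G.toPreGraph.localMP (gaussCI S) ↔ G.toPreGraph.pairwiseMP (gaussCI S) := by
  constructor
  · intro hloc i j hij hadj K hK hi
    obtain ⟨hL1, hL2⟩ := hloc K hK i hi
    refine ⟨(ChainGraph.local1_iff_pairwise1 hS hK hi).mp hL1 j hij hadj, fun hj => ?_⟩
    exact (ChainGraph.local2_iff_forall_singleton hS hK hi).mp hL2 j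
      (ChainGraph.mem_local2_of_pairwise2 hK hi hadj hj)
  · intro hpw K hK i hi
    exact ⟨(ChainGraph.local1_iff_pairwise1 hS hK hi).mpr
        fun j hij hadj => (hpw i j hij hadj K hK hi).1,
      (ChainGraph.local2_iff_forall_singleton hS hK hi).mpr
        (ChainGraph.local2_of_pairwise hG hS hpw hK hi)⟩
end
end

section
/- Let G be a unified chain graph (UCG) over a finite vertex set V and let X, Y, Z be pairwise disjoint subsets of V with X ⊥_G Y | Z. Let Y' = {B' ∈ V(G^{X∪Y∪Z}) ∖ (X ∪ Z) : X ⊥_{G^{X∪Y∪Z}} B' | Z} and X' = V(G^{X∪Y∪Z}) ∖ (Y' ∪ Z). Then X' ⊥_{G^{X∪Y∪Z}} Y' | Z. -/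
open Matrix MeasureTheory ProbabilityTheory

attribute [local instance] Classical.propDecidable

noncomputable section

variable {V : Type*}

/- ===================== Auxiliary development for Lemma 2 ===================== -/

section Lemma2Aux

variable {V : Type*}

namespace PreGraph

/-- Exclusivity of edge types (holds in chain graphs and their derived graphs). -/
structure Excl (P : PreGraph V) : Prop where
  us : ∀ a b, P.und a b → ¬ P.solid a b
  ud : ∀ a b, P.und a b → ¬ P.dashed a b
  ss : ∀ a b, P.solid a b → ¬ P.solid b a
  sd : ∀ a b, P.solid a b → ¬ P.dashed a b
  sd' : ∀ a b, P.solid a b → ¬ P.dashed b a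
  dd : ∀ a b, P.dashed a b → ¬ P.dashed b a

variable {P : PreGraph V}

lemma und_symm {a b : V} (h : P.und a b) : P.und b a := h.symm

lemma adj_symm {a b : V} (h : P.adj a b) : P.adj b a := by
  unfold adj und at h ⊢; tauto

lemma und_adj {a b : V} (h : P.und a b) : P.adj a b := Or.inl h

lemma solid_adj {a b : V} (h : P.solid a b) : P.adj a b := Or.inr (Or.inl h)

lemma dashed_adj {a b : V} (h : P.dashed a b) : P.adj a b := Or.inr (Or.inr (Or.inr (Or.inl h)))

/-- Either side of a collider triple points into the centre. -/
lemma triple_into {u a v : V} (h : P.colliderTriple u a v) :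
    (P.dashed u a ∨ P.und u a ∨ P.solid u a) ∧ (P.dashed v a ∨ P.und v a ∨ P.solid v a) := by
  rcases h with ⟨h1, h2⟩ | ⟨h1, h2⟩ | ⟨h1, h2⟩ | ⟨h1, h2⟩ | ⟨h1, h2⟩
  · exact ⟨Or.inl h1, Or.inl h2⟩
  · exact ⟨Or.inl h1, Or.inr (Or.inl (und_symm h2))⟩
  · exact ⟨Or.inr (Or.inl h1), Or.inl h2⟩
  · exact ⟨Or.inl h1, Or.inr (Or.inr h2)⟩
  · exact ⟨Or.inr (Or.inr h1), Or.inl h2⟩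

/-- A collider triple has a dashed edge into the centre on one of the two sides. -/
lemma triple_dashed {u a v : V} (h : P.colliderTriple u a v) :
    P.dashed u a ∨ P.dashed v a := by
  rcases h with ⟨h1, _⟩ | ⟨h1, _⟩ | ⟨_, h2⟩ | ⟨h1, _⟩ | ⟨_, h2⟩ <;> tauto

/-- An edge pointing out of `a` towards `u` excludes any edge pointing into `a` from `u`. -/
lemma out_no_in (hE : P.Excl) {u a : V} (hout : P.solid a u ∨ P.dashed a u) :
    ¬ (P.dashed u a ∨ P.und u a ∨ P.solid u a) := by
  rintro (h | h | h) <;> rcases hout with h' | h'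
  · exact hE.sd' a u h' h
  · exact hE.dd a u h' h
  · exact hE.us a u (und_symm h) h'
  · exact hE.ud a u (und_symm h) h'
  · exact hE.ss u a h h'
  · exact hE.sd' u a h h'

lemma colliderTriple_symm {u a v : V} (h : P.colliderTriple u a v) :
    P.colliderTriple v a u := by
  rcases h with ⟨h1, h2⟩ | ⟨h1, h2⟩ | ⟨h1, h2⟩ | ⟨h1, h2⟩ | ⟨h1, h2⟩
  · exact Or.inl ⟨h2, h1⟩
  · exact Or.inr (Or.inr (Or.inl ⟨und_symm h2, h1⟩))
  · exact Or.inr (Or.inl ⟨h2, und_symm h1⟩)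
  · exact Or.inr (Or.inr (Or.inr (Or.inr ⟨h2, h1⟩)))
  · exact Or.inr (Or.inr (Or.inr (Or.inl ⟨h2, h1⟩)))

/-! ### Route operations -/

/-- Concatenation of two routes sharing an endpoint. -/
def Route.append (ρ₁ ρ₂ : P.Route) (h : ρ₁.nodes ρ₁.len = ρ₂.nodes 0) : P.Route where
  len := ρ₁.len + ρ₂.len
  nodes := fun i => if i ≤ ρ₁.len then ρ₁.nodes i else ρ₂.nodes (i - ρ₁.len)
  adj_step := by
    intro i hi
    by_cases h1 : i + 1 ≤ ρ₁.len
    · rw [if_pos (by omega : i ≤ ρ₁.len), if_pos h1]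
      exact ρ₁.adj_step i (by omega)
    · by_cases h2 : i ≤ ρ₁.len
      · have hi' : i = ρ₁.len := by omega
        rw [if_pos h2, if_neg h1, hi', h]
        have h3 : ρ₁.len + 1 - ρ₁.len = 1 := by omega
        rw [h3]
        exact ρ₂.adj_step 0 (by omega)
      · rw [if_neg h2, if_neg h1]
        have h3 : i + 1 - ρ₁.len = (i - ρ₁.len) + 1 := by omega
        rw [h3]
        exact ρ₂.adj_step (i - ρ₁.len) (by omega)

lemma Route.append_len (ρ₁ ρ₂ : P.Route) (h : ρ₁.nodes ρ₁.len = ρ₂.nodes 0) :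
    (ρ₁.append ρ₂ h).len = ρ₁.len + ρ₂.len := rfl

lemma Route.append_nodes_le (ρ₁ ρ₂ : P.Route) (h : ρ₁.nodes ρ₁.len = ρ₂.nodes 0)
    {i : ℕ} (hi : i ≤ ρ₁.len) : (ρ₁.append ρ₂ h).nodes i = ρ₁.nodes i := if_pos hi

lemma Route.append_nodes_ge (ρ₁ ρ₂ : P.Route) (h : ρ₁.nodes ρ₁.len = ρ₂.nodes 0)
    {i : ℕ} (hi : ρ₁.len ≤ i) : (ρ₁.append ρ₂ h).nodes i = ρ₂.nodes (i - ρ₁.len) := by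
  by_cases h1 : i ≤ ρ₁.len
  · have h2 : i = ρ₁.len := le_antisymm h1 hi
    have h3 : (ρ₁.append ρ₂ h).nodes i = ρ₁.nodes i := if_pos h1
    rw [h3, h2, Nat.sub_self, h]
  · exact if_neg h1

lemma Route.append_nodes_zero (ρ₁ ρ₂ : P.Route) (h : ρ₁.nodes ρ₁.len = ρ₂.nodes 0) :
    (ρ₁.append ρ₂ h).nodes 0 = ρ₁.nodes 0 := Route.append_nodes_le _ _ _ (Nat.zero_le _)

lemma Route.append_nodes_last (ρ₁ ρ₂ : P.Route) (h : ρ₁.nodes ρ₁.len = ρ₂.nodes 0) :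
    (ρ₁.append ρ₂ h).nodes (ρ₁.append ρ₂ h).len = ρ₂.nodes ρ₂.len := by
  rw [Route.append_len, Route.append_nodes_ge _ _ _ (by omega)]
  congr 1
  omega

/-- Reversal of a route. -/
def Route.reverse (ρ : P.Route) : P.Route where
  len := ρ.len
  nodes := fun i => ρ.nodes (ρ.len - i)
  adj_step := by
    intro i hi
    have h1 : ρ.len - i = (ρ.len - (i + 1)) + 1 := by omega
    rw [h1]
    exact adj_symm (ρ.adj_step (ρ.len - (i + 1)) (by omega))

lemma Route.reverse_len (ρ : P.Route) : ρ.reverse.len = ρ.len := rfl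

lemma Route.reverse_nodes (ρ : P.Route) (i : ℕ) : ρ.reverse.nodes i = ρ.nodes (ρ.len - i) := rfl

lemma Route.reverse_nodes_zero (ρ : P.Route) : ρ.reverse.nodes 0 = ρ.nodes ρ.len := by
  rw [Route.reverse_nodes, Nat.sub_zero]

lemma Route.reverse_nodes_last (ρ : P.Route) : ρ.reverse.nodes ρ.reverse.len = ρ.nodes 0 := by
  rw [Route.reverse_nodes, Route.reverse_len, Nat.sub_self]

/-! ### Transfer of collider predicates along append, reverse and congruence -/

lemma Route.append_coll_left {ρ₁ ρ₂ : P.Route} {h : ρ₁.nodes ρ₁.len = ρ₂.nodes 0} {k : ℕ}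
    (hk : k + 1 ≤ ρ₁.len) :
    (ρ₁.append ρ₂ h).colliderNodeAt k ↔ ρ₁.colliderNodeAt k := by
  unfold Route.colliderNodeAt
  rw [Route.append_nodes_le _ _ _ (by omega : k - 1 ≤ ρ₁.len),
    Route.append_nodes_le _ _ _ (by omega : k ≤ ρ₁.len),
    Route.append_nodes_le _ _ _ hk, Route.append_len]
  constructor <;> rintro ⟨h1, h2, h3⟩ <;> exact ⟨h1, by omega, h3⟩

lemma Route.append_coll_right {ρ₁ ρ₂ : P.Route} {h : ρ₁.nodes ρ₁.len = ρ₂.nodes 0} {k : ℕ}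
    (hk : ρ₁.len + 1 ≤ k) :
    (ρ₁.append ρ₂ h).colliderNodeAt k ↔ ρ₂.colliderNodeAt (k - ρ₁.len) := by
  unfold Route.colliderNodeAt
  have e1 : (ρ₁.append ρ₂ h).nodes (k - 1) = ρ₂.nodes (k - ρ₁.len - 1) := by
    rw [Route.append_nodes_ge _ _ _ (by omega)]; congr 1; omega
  have e2 : (ρ₁.append ρ₂ h).nodes k = ρ₂.nodes (k - ρ₁.len) :=
    Route.append_nodes_ge _ _ _ (by omega)
  have e3 : (ρ₁.append ρ₂ h).nodes (k + 1) = ρ₂.nodes (k - ρ₁.len + 1) := by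
    rw [Route.append_nodes_ge _ _ _ (by omega)]; congr 1; omega
  rw [e1, e2, e3, Route.append_len]
  constructor <;> rintro ⟨h1, h2, h3⟩ <;> exact ⟨by omega, by omega, h3⟩

lemma Route.append_occ_left {ρ₁ ρ₂ : P.Route} {h : ρ₁.nodes ρ₁.len = ρ₂.nodes 0} {p q : ℕ}
    (hq : q + 1 ≤ ρ₁.len) :
    (ρ₁.append ρ₂ h).colliderSectionOcc p q ↔ ρ₁.colliderSectionOcc p q := by
  unfold Route.colliderSectionOcc
  constructor <;> rintro ⟨h1, h2, h3, h4, h5, h6⟩ <;>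
    [(refine ⟨h1, h2, hq, fun m hm hm' => ?_, ?_, ?_⟩); (refine ⟨h1, h2, show q + 1 ≤ ρ₁.len + ρ₂.len by omega, fun m hm hm' => ?_, ?_, ?_⟩)]
  · have h7 := h4 m hm hm'
    rwa [Route.append_nodes_le _ _ _ (by omega), Route.append_nodes_le _ _ _ (by omega)] at h7
  · rwa [Route.append_nodes_le _ _ _ (by omega), Route.append_nodes_le _ _ _ (by omega)] at h5
  · rwa [Route.append_nodes_le _ _ _ (by omega), Route.append_nodes_le _ _ _ (by omega)] at h6
  · have h7 := h4 m hm hm'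
    rwa [Route.append_nodes_le _ _ _ (by omega), Route.append_nodes_le _ _ _ (by omega)]
  · rwa [Route.append_nodes_le _ _ _ (by omega), Route.append_nodes_le _ _ _ (by omega)]
  · rwa [Route.append_nodes_le _ _ _ (by omega), Route.append_nodes_le _ _ _ (by omega)]

lemma Route.append_occ_right {ρ₁ ρ₂ : P.Route} {h : ρ₁.nodes ρ₁.len = ρ₂.nodes 0} {p q : ℕ}
    (hp : ρ₁.len + 1 ≤ p) :
    (ρ₁.append ρ₂ h).colliderSectionOcc p q ↔
      ρ₂.colliderSectionOcc (p - ρ₁.len) (q - ρ₁.len) := by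
  unfold Route.colliderSectionOcc
  constructor <;> rintro ⟨h1, h2, h3, h4, h5, h6⟩
  · have e1 : (ρ₁.append ρ₂ h).nodes (p - 1) = ρ₂.nodes (p - ρ₁.len - 1) := by
      rw [Route.append_nodes_ge _ _ _ (by omega)]; congr 1; omega
    have e2 : (ρ₁.append ρ₂ h).nodes p = ρ₂.nodes (p - ρ₁.len) :=
      Route.append_nodes_ge _ _ _ (by omega)
    have e3 : (ρ₁.append ρ₂ h).nodes (q + 1) = ρ₂.nodes (q - ρ₁.len + 1) := by
      rw [Route.append_nodes_ge _ _ _ (by omega)]; congr 1; omega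
    have e4 : (ρ₁.append ρ₂ h).nodes q = ρ₂.nodes (q - ρ₁.len) :=
      Route.append_nodes_ge _ _ _ (by omega)
    have h3' : q + 1 ≤ ρ₁.len + ρ₂.len := h3
    refine ⟨by omega, by omega, by omega, fun m hm hm' => ?_, ?_, ?_⟩
    · have h7 := h4 (m + ρ₁.len) (by omega) (by omega)
      have e5 : (ρ₁.append ρ₂ h).nodes (m + ρ₁.len) = ρ₂.nodes m := by
        rw [Route.append_nodes_ge _ _ _ (by omega)]; congr 1; omega
      have e6 : (ρ₁.append ρ₂ h).nodes (m + ρ₁.len + 1) = ρ₂.nodes (m + 1) := by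
        rw [Route.append_nodes_ge _ _ _ (by omega)]; congr 1; omega
      rwa [e5, e6] at h7
    · rwa [e1, e2] at h5
    · rwa [e3, e4] at h6
  · have hq : ρ₁.len + 1 ≤ q := by omega
    have e1 : (ρ₁.append ρ₂ h).nodes (p - 1) = ρ₂.nodes (p - ρ₁.len - 1) := by
      rw [Route.append_nodes_ge _ _ _ (by omega)]; congr 1; omega
    have e2 : (ρ₁.append ρ₂ h).nodes p = ρ₂.nodes (p - ρ₁.len) :=
      Route.append_nodes_ge _ _ _ (by omega)
    have e3 : (ρ₁.append ρ₂ h).nodes (q + 1) = ρ₂.nodes (q - ρ₁.len + 1) := by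
      rw [Route.append_nodes_ge _ _ _ (by omega)]; congr 1; omega
    have e4 : (ρ₁.append ρ₂ h).nodes q = ρ₂.nodes (q - ρ₁.len) :=
      Route.append_nodes_ge _ _ _ (by omega)
    have h3' : q - ρ₁.len + 1 ≤ ρ₂.len := h3
    refine ⟨by omega, by omega, ?_, fun m hm hm' => ?_, ?_, ?_⟩
    · show q + 1 ≤ ρ₁.len + ρ₂.len; omega
    · have h7 := h4 (m - ρ₁.len) (by omega) (by omega)
      have e5 : (ρ₁.append ρ₂ h).nodes m = ρ₂.nodes (m - ρ₁.len) :=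
        Route.append_nodes_ge _ _ _ (by omega)
      have e6 : (ρ₁.append ρ₂ h).nodes (m + 1) = ρ₂.nodes (m - ρ₁.len + 1) := by
        rw [Route.append_nodes_ge _ _ _ (by omega)]; congr 1; omega
      rw [e5, e6]
      exact h7
    · rwa [e1, e2]
    · rwa [e3, e4]

lemma Route.open_congr {τ ρ : P.Route} {Z : Finset V} (hl : τ.len = ρ.len)
    (hn : ∀ i ≤ ρ.len, τ.nodes i = ρ.nodes i) (ho : ρ.IsZOpen Z) : τ.IsZOpen Z := by
  have hcoll : ∀ k, τ.colliderNodeAt k ↔ ρ.colliderNodeAt k := by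
    intro k
    unfold Route.colliderNodeAt
    rw [hl]
    constructor <;> rintro ⟨h1, h2, h3⟩ <;> refine ⟨h1, h2, ?_⟩
    · rwa [hn (k-1) (by omega), hn k (by omega), hn (k+1) (by omega)] at h3
    · rwa [hn (k-1) (by omega), hn k (by omega), hn (k+1) (by omega)]
  have hocc : ∀ p q, τ.colliderSectionOcc p q ↔ ρ.colliderSectionOcc p q := by
    intro p q
    unfold Route.colliderSectionOcc
    rw [hl]
    constructor <;> rintro ⟨h1, h2, h3, h4, h5, h6⟩ <;>
      refine ⟨h1, h2, h3, fun m hm hm' => ?_, ?_, ?_⟩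
    · have h7 := h4 m hm hm'
      rwa [hn m (by omega), hn (m+1) (by omega)] at h7
    · rwa [hn (p-1) (by omega), hn p (by omega)] at h5
    · rwa [hn (q+1) (by omega), hn q (by omega)] at h6
    · have h7 := h4 m hm hm'
      rwa [hn m (by omega), hn (m+1) (by omega)]
    · rwa [hn (p-1) (by omega), hn p (by omega)]
    · rwa [hn (q+1) (by omega), hn q (by omega)]
  obtain ⟨o1, o2, o3⟩ := ho
  refine ⟨fun k hk => ?_, fun p q hpq => ?_, fun k hk h1 h2 => ?_⟩
  · have hk' := (hcoll k).mp hk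
    rw [hn k (le_of_lt hk'.2.1)]
    exact o1 k hk'
  · have hpq' := (hocc p q).mp hpq
    have hq' : q + 1 ≤ ρ.len := hpq'.2.2.1
    obtain ⟨m, hm1, hm2, hm3⟩ := o2 p q hpq'
    exact ⟨m, hm1, hm2, by rwa [hn m (by omega)]⟩
  · rw [hn k (by omega)]
    refine o3 k (by omega) (fun hc => h1 ((hcoll k).mpr hc)) ?_
    rintro ⟨p, q, hpq, hp, hq⟩
    exact h2 ⟨p, q, (hocc p q).mpr hpq, hp, hq⟩

lemma Route.reverse_coll {ρ : P.Route} {k : ℕ} :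
    ρ.reverse.colliderNodeAt k ↔ ρ.colliderNodeAt (ρ.len - k) := by
  unfold Route.colliderNodeAt
  constructor
  · rintro ⟨h1, h2, h3⟩
    have h2' : k < ρ.len := h2
    refine ⟨by omega, by omega, ?_⟩
    have e1 : ρ.len - k - 1 = ρ.len - (k+1) := by omega
    have e2 : ρ.len - k + 1 = ρ.len - (k-1) := by omega
    rw [e1, e2]
    exact colliderTriple_symm h3
  · rintro ⟨h1, h2, h3⟩
    refine ⟨by omega, show k < ρ.len by omega, ?_⟩
    show P.colliderTriple (ρ.nodes (ρ.len - (k-1))) (ρ.nodes (ρ.len - k)) (ρ.nodes (ρ.len - (k+1)))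
    have e1 : ρ.len - (k+1) = ρ.len - k - 1 := by omega
    have e2 : ρ.len - (k-1) = ρ.len - k + 1 := by omega
    rw [e1, e2]
    exact colliderTriple_symm h3

lemma Route.reverse_occ {ρ : P.Route} {p q : ℕ} :
    ρ.reverse.colliderSectionOcc p q ↔ ρ.colliderSectionOcc (ρ.len - q) (ρ.len - p) := by
  unfold Route.colliderSectionOcc
  constructor
  · rintro ⟨h1, h2, h3, h4, h5, h6⟩
    have h3' : q + 1 ≤ ρ.len := h3
    refine ⟨by omega, by omega, by omega, fun m hm hm' => ?_, ?_, ?_⟩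
    · have h7 := h4 (ρ.len - m - 1) (by omega) (by omega)
      have e1 : ρ.len - (ρ.len - m - 1) = m + 1 := by omega
      have e2 : ρ.len - (ρ.len - m - 1 + 1) = m := by omega
      rw [Route.reverse_nodes, Route.reverse_nodes, e1, e2] at h7
      exact und_symm h7
    · have e1 : ρ.len - q - 1 = ρ.len - (q + 1) := by omega
      rw [e1]
      exact h6
    · have e1 : ρ.len - p + 1 = ρ.len - (p - 1) := by omega
      rw [e1]
      exact h5
  · rintro ⟨h1, h2, h3, h4, h5, h6⟩
    have hq : q + 1 ≤ ρ.len := by omega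
    have hp : 1 ≤ p := by omega
    refine ⟨hp, by omega, hq, fun m hm hm' => ?_, ?_, ?_⟩
    · have h7 := h4 (ρ.len - m - 1) (by omega) (by omega)
      show P.und (ρ.nodes (ρ.len - m)) (ρ.nodes (ρ.len - (m + 1)))
      have e1 : ρ.len - m = ρ.len - m - 1 + 1 := by omega
      have e2 : ρ.len - (m + 1) = ρ.len - m - 1 := by omega
      rw [e1, e2]
      exact und_symm h7
    · show P.solid (ρ.nodes (ρ.len - (p - 1))) (ρ.nodes (ρ.len - p))
      have e1 : ρ.len - (p - 1) = ρ.len - p + 1 := by omega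
      rw [e1]
      exact h6
    · show P.solid (ρ.nodes (ρ.len - (q + 1))) (ρ.nodes (ρ.len - q))
      have e1 : ρ.len - (q + 1) = ρ.len - q - 1 := by omega
      rw [e1]
      exact h5

lemma Route.reverse_open {ρ : P.Route} {Z : Finset V} (ho : ρ.IsZOpen Z) :
    ρ.reverse.IsZOpen Z := by
  obtain ⟨o1, o2, o3⟩ := ho
  refine ⟨fun k hk => ?_, fun p q hpq => ?_, fun k hk h1 h2 => ?_⟩
  · exact o1 (ρ.len - k) (Route.reverse_coll.mp hk)
  · have hpq' := Route.reverse_occ.mp hpq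
    have hb1 : 1 ≤ p := hpq.1
    have hb2 : p ≤ q := hpq.2.1
    have hb3 : q + 1 ≤ ρ.len := hpq.2.2.1
    obtain ⟨m, hm1, hm2, hm3⟩ := o2 _ _ hpq'
    refine ⟨ρ.len - m, by omega, by omega, ?_⟩
    show ρ.nodes (ρ.len - (ρ.len - m)) ∈ Z
    have hb4 : ρ.len - p ≥ m := hm2
    have e1 : ρ.len - (ρ.len - m) = m := by omega
    rw [e1]
    exact hm3
  · have hk' : k ≤ ρ.len := hk
    show ρ.nodes (ρ.len - k) ∉ Z
    refine o3 (ρ.len - k) (by omega) (fun hc => ?_) (fun hc => ?_)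
    · exact h1 (Route.reverse_coll.mpr hc)
    · obtain ⟨p, q, hpq, hp, hq⟩ := hc
      have hb1 : 1 ≤ p := hpq.1
      have hb3 : q + 1 ≤ ρ.len := hpq.2.2.1
      apply h2
      refine ⟨ρ.len - q, ρ.len - p, ?_, by omega, by omega⟩
      rw [Route.reverse_occ]
      have e1 : ρ.len - (ρ.len - p) = p := by omega
      have e2 : ρ.len - (ρ.len - q) = q := by omega
      rwa [e1, e2]

/-! ### Openness of concatenations -/

/-- The first edge of the route leaves the initial node. -/
def Route.outFirst (ρ : P.Route) : Prop :=
  P.solid (ρ.nodes 0) (ρ.nodes 1) ∨ P.dashed (ρ.nodes 0) (ρ.nodes 1)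

/-- The last edge of the route leaves the final node. -/
def Route.outLast (ρ : P.Route) : Prop :=
  P.solid (ρ.nodes ρ.len) (ρ.nodes (ρ.len - 1)) ∨ P.dashed (ρ.nodes ρ.len) (ρ.nodes (ρ.len - 1))

/-- Core lemma: the concatenation of two `Z`-open routes at a node outside `Z` is `Z`-open
provided the junction is not a collider node and no collider section occurrence spans it. -/
theorem Route.append_open_core (hE : P.Excl) {ρ₁ ρ₂ : P.Route}
    (h : ρ₁.nodes ρ₁.len = ρ₂.nodes 0) {Z : Finset V}
    (h₁ : ρ₁.IsZOpen Z) (h₂ : ρ₂.IsZOpen Z) (hz : ρ₂.nodes 0 ∉ Z)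
    (hl₁ : 1 ≤ ρ₁.len) (hl₂ : 1 ≤ ρ₂.len)
    (jnc : ¬ P.colliderTriple (ρ₁.nodes (ρ₁.len - 1)) (ρ₂.nodes 0) (ρ₂.nodes 1))
    (jno : ∀ p q, (ρ₁.append ρ₂ h).colliderSectionOcc p q → p ≤ ρ₁.len → ρ₁.len ≤ q → False) :
    (ρ₁.append ρ₂ h).IsZOpen Z := by
  obtain ⟨a1, a2, a3⟩ := h₁
  obtain ⟨b1, b2, b3⟩ := h₂
  have ej : (ρ₁.append ρ₂ h).nodes ρ₁.len = ρ₂.nodes 0 := by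
    rw [Route.append_nodes_ge _ _ _ le_rfl, Nat.sub_self]
  have hjn : ¬ (ρ₁.append ρ₂ h).colliderNodeAt ρ₁.len := by
    rintro ⟨h1', h2', h3'⟩
    apply jnc
    have e1 : (ρ₁.append ρ₂ h).nodes (ρ₁.len - 1) = ρ₁.nodes (ρ₁.len - 1) :=
      Route.append_nodes_le _ _ _ (by omega)
    have e3 : (ρ₁.append ρ₂ h).nodes (ρ₁.len + 1) = ρ₂.nodes 1 := by
      rw [Route.append_nodes_ge _ _ _ (by omega)]; congr 1; omega
    rwa [e1, ej, e3] at h3'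
  refine ⟨fun k hk => ?_, fun p q hpq => ?_, fun k hk h1' h2' => ?_⟩
  · rcases lt_trichotomy k ρ₁.len with hlt | heq | hgt
    · have hk' := (Route.append_coll_left (by omega)).mp hk
      rw [Route.append_nodes_le _ _ _ (by omega)]
      exact a1 k hk'
    · exact absurd (heq ▸ hk) hjn
    · have hk' := (Route.append_coll_right (by omega)).mp hk
      rw [Route.append_nodes_ge _ _ _ (by omega)]
      exact b1 _ hk'
  · by_cases hq : q + 1 ≤ ρ₁.len
    · have hpq' := (Route.append_occ_left hq).mp hpq
      obtain ⟨m, hm1, hm2, hm3⟩ := a2 p q hpq'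
      exact ⟨m, hm1, hm2, by rw [Route.append_nodes_le _ _ _ (by omega)]; exact hm3⟩
    · by_cases hp : ρ₁.len + 1 ≤ p
      · have hpq' := (Route.append_occ_right hp).mp hpq
        obtain ⟨m, hm1, hm2, hm3⟩ := b2 _ _ hpq'
        have hb : q + 1 ≤ ρ₁.len + ρ₂.len := hpq.2.2.1
        refine ⟨m + ρ₁.len, by omega, by omega, ?_⟩
        rw [Route.append_nodes_ge _ _ _ (by omega)]
        have e : m + ρ₁.len - ρ₁.len = m := by omega
        rwa [e]
      · exfalso
        have hb1 : 1 ≤ p := hpq.1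
        have hb2 : p ≤ q := hpq.2.1
        exact jno p q hpq (by omega) (by omega)
  · rcases lt_trichotomy k ρ₁.len with hlt | heq | hgt
    · rw [Route.append_nodes_le _ _ _ (by omega)]
      refine a3 k (by omega) (fun hc => ?_) (fun hc => ?_)
      · exact h1' ((Route.append_coll_left (by omega : k + 1 ≤ ρ₁.len)).mpr hc)
      · obtain ⟨p, q, hpq, hp, hq⟩ := hc
        have hb : q + 1 ≤ ρ₁.len := hpq.2.2.1
        exact h2' ⟨p, q, (Route.append_occ_left hb).mpr hpq, hp, hq⟩
    · rw [heq, ej]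
      exact hz
    · rw [Route.append_nodes_ge _ _ _ (by omega)]
      have hk' : k ≤ ρ₁.len + ρ₂.len := hk
      refine b3 (k - ρ₁.len) (by omega) (fun hc => ?_) (fun hc => ?_)
      · exact h1' ((Route.append_coll_right (by omega)).mpr hc)
      · obtain ⟨p, q, hpq, hp, hq⟩ := hc
        have hb3 : q + 1 ≤ ρ₂.len := hpq.2.2.1
        have hb1 : 1 ≤ p := hpq.1
        refine h2' ⟨p + ρ₁.len, q + ρ₁.len, ?_, by omega, by omega⟩
        rw [Route.append_occ_right (by omega : ρ₁.len + 1 ≤ p + ρ₁.len)]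
        have e1 : p + ρ₁.len - ρ₁.len = p := by omega
        have e2 : q + ρ₁.len - ρ₁.len = q := by omega
        rwa [e1, e2]

/-- Degenerate concatenation: one of the two pieces has length zero. -/
theorem Route.append_open_zero {ρ₁ ρ₂ : P.Route} (h : ρ₁.nodes ρ₁.len = ρ₂.nodes 0)
    {Z : Finset V} (h₁ : ρ₁.IsZOpen Z) (h₂ : ρ₂.IsZOpen Z)
    (hl : ρ₁.len = 0 ∨ ρ₂.len = 0) : (ρ₁.append ρ₂ h).IsZOpen Z := by
  rcases hl with hl | hl
  · refine Route.open_congr (ρ := ρ₂) (by simp [Route.append_len, hl]) (fun i hi => ?_) h₂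
    rcases Nat.eq_zero_or_pos i with h0 | h0
    · have hj := h
      rw [hl] at hj
      rw [h0, Route.append_nodes_zero, hj]
    · rw [Route.append_nodes_ge _ _ _ (by omega), hl, Nat.sub_zero]
  · refine Route.open_congr (ρ := ρ₁) (by simp [Route.append_len, hl]) (fun i hi => ?_) h₁
    exact Route.append_nodes_le _ _ _ hi

/-- Concatenation of open routes at a non-`Z` node where one of the two adjacent edges
leaves the junction node. -/
theorem Route.append_open_out (hE : P.Excl) {ρ₁ ρ₂ : P.Route}
    (h : ρ₁.nodes ρ₁.len = ρ₂.nodes 0) {Z : Finset V}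
    (h₁ : ρ₁.IsZOpen Z) (h₂ : ρ₂.IsZOpen Z) (hz : ρ₂.nodes 0 ∉ Z)
    (hout : ρ₁.outLast ∨ ρ₂.outFirst) :
    (ρ₁.append ρ₂ h).IsZOpen Z := by
  by_cases hl₁ : ρ₁.len = 0
  · exact Route.append_open_zero h h₁ h₂ (Or.inl hl₁)
  by_cases hl₂ : ρ₂.len = 0
  · exact Route.append_open_zero h h₁ h₂ (Or.inr hl₂)
  refine Route.append_open_core hE h h₁ h₂ hz (by omega) (by omega) ?_ ?_
  · intro htriple
    rcases hout with ho | ho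
    · unfold Route.outLast at ho
      rw [h] at ho
      exact out_no_in hE ho (triple_into htriple).1
    · exact out_no_in hE ho (triple_into htriple).2
  · intro p q hpq hp hq
    obtain ⟨hb1, hb2, hb3, hund, hsolP, hsolQ⟩ := hpq
    have hb3' : q + 1 ≤ ρ₁.len + ρ₂.len := hb3
    have ej : (ρ₁.append ρ₂ h).nodes ρ₁.len = ρ₂.nodes 0 := by
      rw [Route.append_nodes_ge _ _ _ le_rfl, Nat.sub_self]
    rcases hout with ho | ho
    · unfold Route.outLast at ho
      rw [h] at ho
      by_cases hps : p = ρ₁.len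
      · have e1 : (ρ₁.append ρ₂ h).nodes (p - 1) = ρ₁.nodes (ρ₁.len - 1) := by
          rw [hps]; exact Route.append_nodes_le _ _ _ (by omega)
        rw [e1, hps, ej] at hsolP
        exact out_no_in hE ho (Or.inr (Or.inr hsolP))
      · have hu := hund (ρ₁.len - 1) (by omega) (by omega)
        have e1 : (ρ₁.append ρ₂ h).nodes (ρ₁.len - 1) = ρ₁.nodes (ρ₁.len - 1) :=
          Route.append_nodes_le _ _ _ (by omega)
        have e2 : ρ₁.len - 1 + 1 = ρ₁.len := by omega
        rw [e1, e2, ej] at hu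
        exact out_no_in hE ho (Or.inr (Or.inl hu))
    · unfold Route.outFirst at ho
      by_cases hqs : q = ρ₁.len
      · have e1 : (ρ₁.append ρ₂ h).nodes (q + 1) = ρ₂.nodes 1 := by
          rw [hqs, Route.append_nodes_ge _ _ _ (by omega)]; congr 1; omega
        rw [e1, hqs, ej] at hsolQ
        exact out_no_in hE ho (Or.inr (Or.inr hsolQ))
      · have hu := hund ρ₁.len hp (by omega)
        have e1 : (ρ₁.append ρ₂ h).nodes (ρ₁.len + 1) = ρ₂.nodes 1 := by
          rw [Route.append_nodes_ge _ _ _ (by omega)]; congr 1; omega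
        rw [ej, e1] at hu
        exact out_no_in hE ho (Or.inr (Or.inl (und_symm hu)))

/-- Concatenation of open routes at a non-`Z` node when the second route is purely
undirected and the last edge of the first route is not dashed into the junction. -/
theorem Route.append_open_undR (hE : P.Excl) {ρ₁ ρ₂ : P.Route}
    (h : ρ₁.nodes ρ₁.len = ρ₂.nodes 0) {Z : Finset V}
    (h₁ : ρ₁.IsZOpen Z) (h₂ : ρ₂.IsZOpen Z) (hz : ρ₂.nodes 0 ∉ Z)
    (hundρ₂ : ∀ i < ρ₂.len, P.und (ρ₂.nodes i) (ρ₂.nodes (i+1)))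
    (hnd : ¬ P.dashed (ρ₁.nodes (ρ₁.len - 1)) (ρ₁.nodes ρ₁.len)) :
    (ρ₁.append ρ₂ h).IsZOpen Z := by
  by_cases hl₁ : ρ₁.len = 0
  · exact Route.append_open_zero h h₁ h₂ (Or.inl hl₁)
  by_cases hl₂ : ρ₂.len = 0
  · exact Route.append_open_zero h h₁ h₂ (Or.inr hl₂)
  refine Route.append_open_core hE h h₁ h₂ hz (by omega) (by omega) ?_ ?_
  · intro htriple
    rcases triple_dashed htriple with hd | hd
    · rw [← h] at hd
      exact hnd hd
    · have hu := hundρ₂ 0 (by omega)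
      exact hE.ud _ _ (und_symm hu) hd
  · intro p q hpq hp hq
    obtain ⟨hb1, hb2, hb3, hund, hsolP, hsolQ⟩ := hpq
    have hb3' : q + 1 ≤ ρ₁.len + ρ₂.len := hb3
    have e1 : (ρ₁.append ρ₂ h).nodes (q + 1) = ρ₂.nodes (q - ρ₁.len + 1) := by
      rw [Route.append_nodes_ge _ _ _ (by omega)]; congr 1; omega
    have e2 : (ρ₁.append ρ₂ h).nodes q = ρ₂.nodes (q - ρ₁.len) :=
      Route.append_nodes_ge _ _ _ (by omega)
    rw [e1, e2] at hsolQ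
    have hu := hundρ₂ (q - ρ₁.len) (by omega)
    exact hE.us _ _ (und_symm hu) hsolQ

/-- Concatenation of open routes at a non-`Z` node when the first route is purely
undirected and the first edge of the second route is not dashed into the junction. -/
theorem Route.append_open_undL (hE : P.Excl) {ρ₁ ρ₂ : P.Route}
    (h : ρ₁.nodes ρ₁.len = ρ₂.nodes 0) {Z : Finset V}
    (h₁ : ρ₁.IsZOpen Z) (h₂ : ρ₂.IsZOpen Z) (hz : ρ₂.nodes 0 ∉ Z)
    (hundρ₁ : ∀ i < ρ₁.len, P.und (ρ₁.nodes i) (ρ₁.nodes (i+1)))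
    (hnd : ¬ P.dashed (ρ₂.nodes 1) (ρ₂.nodes 0)) :
    (ρ₁.append ρ₂ h).IsZOpen Z := by
  by_cases hl₁ : ρ₁.len = 0
  · exact Route.append_open_zero h h₁ h₂ (Or.inl hl₁)
  by_cases hl₂ : ρ₂.len = 0
  · exact Route.append_open_zero h h₁ h₂ (Or.inr hl₂)
  refine Route.append_open_core hE h h₁ h₂ hz (by omega) (by omega) ?_ ?_
  · intro htriple
    rcases triple_dashed htriple with hd | hd
    · have hu := hundρ₁ (ρ₁.len - 1) (by omega)
      have e : ρ₁.len - 1 + 1 = ρ₁.len := by omega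
      rw [e, h] at hu
      exact hE.ud _ _ hu hd
    · exact hnd hd
  · intro p q hpq hp hq
    obtain ⟨hb1, hb2, hb3, hund, hsolP, hsolQ⟩ := hpq
    have e1 : (ρ₁.append ρ₂ h).nodes (p - 1) = ρ₁.nodes (p - 1) :=
      Route.append_nodes_le _ _ _ (by omega)
    have e2 : (ρ₁.append ρ₂ h).nodes p = ρ₁.nodes p := Route.append_nodes_le _ _ _ (by omega)
    rw [e1, e2] at hsolP
    have hu := hundρ₁ (p - 1) (by omega)
    have e3 : p - 1 + 1 = p := by omega
    rw [e3] at hu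
    exact hE.us _ _ hu hsolP

/-- A descending route (all edges undirected or directed forwards, no dashed edge followed
by an undirected one) avoiding `Z` is `Z`-open. -/
theorem Route.desc_open (hE : P.Excl) {ρ : P.Route} {Z : Finset V}
    (hfwd : ∀ i < ρ.len, P.und (ρ.nodes i) (ρ.nodes (i+1)) ∨
      P.solid (ρ.nodes i) (ρ.nodes (i+1)) ∨ P.dashed (ρ.nodes i) (ρ.nodes (i+1)))
    (hdu : ∀ i, i + 2 ≤ ρ.len →
      ¬ (P.dashed (ρ.nodes i) (ρ.nodes (i+1)) ∧ P.und (ρ.nodes (i+1)) (ρ.nodes (i+2))))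
    (hZ : ∀ i ≤ ρ.len, ρ.nodes i ∉ Z) : ρ.IsZOpen Z := by
  have noin : ∀ k, 1 ≤ k → k < ρ.len → ¬ P.dashed (ρ.nodes (k+1)) (ρ.nodes k) ∧
      ¬ P.solid (ρ.nodes (k+1)) (ρ.nodes k) := by
    intro k _ hk
    rcases hfwd k hk with hu | hs | hd
    · exact ⟨hE.ud _ _ (und_symm hu), hE.us _ _ (und_symm hu)⟩
    · exact ⟨hE.sd' _ _ hs, hE.ss _ _ hs⟩
    · exact ⟨hE.dd _ _ hd, fun hs => hE.sd' _ _ hs hd⟩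
  refine ⟨fun k hk => ?_, fun p q hpq => ?_, fun k hk _ _ => hZ k hk⟩
  · exfalso
    obtain ⟨h1, h2, h3⟩ := hk
    rcases h3 with ⟨hd1, hd2⟩ | ⟨hd1, hd2⟩ | ⟨hd1, hd2⟩ | ⟨hd1, hd2⟩ | ⟨hd1, hd2⟩
    · exact (noin k h1 h2).1 hd2
    · refine hdu (k - 1) (by omega) ?_
      have e1 : k - 1 + 1 = k := by omega
      have e2 : k - 1 + 2 = k + 1 := by omega
      rw [e1, e2]
      exact ⟨hd1, hd2⟩
    · exact (noin k h1 h2).1 hd2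
    · exact (noin k h1 h2).2 hd2
    · exact (noin k h1 h2).1 hd2
  · exfalso
    obtain ⟨h1, h2, h3, _, _, h6⟩ := hpq
    exact (noin q (by omega) (by omega)).2 h6

/-- The "run bounce": descend from `c0` through a solid edge into an undirected run ending
at a node of `Z`, and climb back.  The result is a `Z`-open route from `c0` to `c0`. -/
theorem run_bounce (hE : P.Excl) {e : ℕ → V} {m : ℕ} {Z : Finset V} (hm : 1 ≤ m)
    (hsol : P.solid (e 0) (e 1)) (hund : ∀ i, 1 ≤ i → i < m → P.und (e i) (e (i+1)))
    (hZ : ∀ i < m, e i ∉ Z) (hw : e m ∈ Z) :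
    ∃ B : P.Route, B.IsZOpen Z ∧ 1 ≤ B.len ∧ B.nodes 0 = e 0 ∧ B.nodes B.len = e 0 ∧
      B.outFirst ∧ B.outLast := by
  have hadj : ∀ i < m, P.adj (e i) (e (i+1)) := by
    intro i hi
    rcases Nat.eq_zero_or_pos i with h0 | h0
    · rw [h0]; exact solid_adj hsol
    · exact und_adj (hund i h0 hi)
  refine ⟨⟨2*m, fun i => e (min i (2*m - i)), ?_⟩, ?_⟩
  · intro i hi
    by_cases him : i < m
    · have e1 : min i (2*m - i) = i := by omega
      have e2 : min (i+1) (2*m - (i+1)) = i + 1 := by omega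
      rw [e1, e2]
      exact hadj i him
    · have e1 : min i (2*m - i) = 2*m - i := by omega
      have e2 : min (i+1) (2*m - (i+1)) = 2*m - i - 1 := by omega
      rw [e1, e2]
      have e3 : 2*m - i = (2*m - i - 1) + 1 := by omega
      rw [e3]
      exact adj_symm (hadj (2*m - i - 1) (by omega))
  · set B : P.Route := ⟨2*m, fun i => e (min i (2*m - i)), _⟩ with hB
    have hA : ∀ i ≤ m, B.nodes i = e i := by
      intro i hi
      show e (min i (2*m - i)) = e i
      congr 1
      omega
    have hBn : ∀ i, m ≤ i → B.nodes i = e (2*m - i) := by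
      intro i hi
      show e (min i (2*m - i)) = e (2*m - i)
      congr 1
      omega
    have st0 : P.solid (B.nodes 0) (B.nodes 1) := by
      rw [hA 0 (by omega), hA 1 (by omega)]; exact hsol
    have stLast : P.solid (B.nodes (2*m)) (B.nodes (2*m - 1)) := by
      rw [hBn (2*m) (by omega), hBn (2*m-1) (by omega)]
      have e1 : 2*m - 2*m = 0 := by omega
      have e2 : 2*m - (2*m - 1) = 1 := by omega
      rw [e1, e2]
      exact hsol
    have stMid : ∀ i, 1 ≤ i → i + 1 ≤ 2*m - 1 → P.und (B.nodes i) (B.nodes (i+1)) := by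
      intro i hi1 hi2
      by_cases him : i < m
      · rw [hA i (by omega), hA (i+1) (by omega)]
        exact hund i hi1 him
      · rw [hBn i (by omega), hBn (i+1) (by omega)]
        have e3 : 2*m - i = (2*m - i - 1) + 1 := by omega
        have e4 : 2*m - (i+1) = 2*m - i - 1 := by omega
        rw [e3, e4]
        exact und_symm (hund (2*m - i - 1) (by omega) (by omega))
    have hocc : B.colliderSectionOcc 1 (2*m - 1) := by
      refine ⟨le_rfl, by omega, show 2*m - 1 + 1 ≤ 2*m by omega,
        fun j hj hj' => stMid j hj (by omega), ?_, ?_⟩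
      · show P.solid (B.nodes 0) (B.nodes 1); exact st0
      · have e1 : 2*m - 1 + 1 = 2*m := by omega
        rw [e1]
        exact stLast
    refine ⟨⟨fun k hk => ?_, fun p q hpq => ?_, fun k hk h1 h2 => ?_⟩,
      show 1 ≤ 2*m by omega, hA 0 (by omega), ?_, ?_, ?_⟩
    · exfalso
      obtain ⟨h1, h2, h3⟩ := hk
      have h2' : k < 2*m := h2
      rcases triple_dashed h3 with hd | hd
      · rcases Nat.eq_zero_or_pos (k - 1) with h0 | h0
        · have hk1 : k = 1 := by omega
          rw [hk1] at hd
          exact hE.sd _ _ st0 (by simpa using hd)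
        · exact hE.ud _ _ (stMid (k-1) (by omega) (by omega)) (by
            have e1 : k - 1 + 1 = k := by omega
            rwa [e1])
      · by_cases hkl : k = 2*m - 1
        · rw [hkl] at hd
          have e1 : 2*m - 1 + 1 = 2*m := by omega
          rw [e1] at hd
          exact hE.sd _ _ stLast hd
        · exact hE.ud _ _ (und_symm (stMid k (by omega) (by omega))) hd
    · obtain ⟨h1, h2, h3, h4, h5, h6⟩ := hpq
      have h3' : q + 1 ≤ 2*m := h3
      have hpm : p ≤ m := by
        by_contra hc
        push_neg at hc
        by_cases hp2 : p = 2*m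
        · omega
        · have hu := stMid (p-1) (by omega) (by omega)
          have e1 : p - 1 + 1 = p := by omega
          rw [e1] at hu
          exact hE.us _ _ hu h5
      have hqm : m ≤ q := by
        by_contra hc
        push_neg at hc
        exact hE.us _ _ (und_symm (stMid q (by omega) (by omega))) h6
      refine ⟨m, hpm, hqm, ?_⟩
      rw [hA m le_rfl]
      exact hw
    · by_cases hkm : k = m
      · exact absurd ⟨1, 2*m - 1, hocc, by omega, by omega⟩ h2
      · have hk' : k ≤ 2*m := hk
        show e (min k (2*m - k)) ∉ Z
        exact hZ _ (by omega)
    · rw [hBn (2*m) (by omega)]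
      show e (2*m - 2*m) = e 0
      congr 1
      omega
    · exact Or.inl st0
    · exact Or.inl stLast

/-- The "directed bounce" across a single directed edge into a `Z` node. -/
theorem bounce_exists (hE : P.Excl) {t w : V} {Z : Finset V}
    (hedge : P.solid t w ∨ P.dashed t w) (ht : t ∉ Z) (hw : w ∈ Z) :
    ∃ B : P.Route, B.IsZOpen Z ∧ 1 ≤ B.len ∧ B.nodes 0 = t ∧ B.nodes B.len = t ∧
      B.outFirst ∧ B.outLast := by
  rcases hedge with hs | hd
  · refine run_bounce hE (e := fun i => if i = 0 then t else w) (m := 1) le_rfl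
      (by simpa using hs) (fun i hi1 hi2 => absurd (lt_of_le_of_lt hi1 hi2) (by omega))
      (fun i hi => by
        have : i = 0 := by omega
        simpa [this] using ht) (by simpa using hw)
  · refine ⟨⟨2, fun i => if i = 1 then w else t, ?_⟩, ?_, show (1:ℕ) ≤ 2 by omega, rfl, rfl, ?_, ?_⟩
    · intro i hi
      interval_cases i
      · simpa using dashed_adj hd
      · simpa using adj_symm (dashed_adj hd)
    · refine ⟨fun k hk => ?_, fun p q hpq => ?_, fun k hk h1 h2 => ?_⟩
      · obtain ⟨hk1, hk2, _⟩ := hk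
        have hk2' : k < 2 := hk2
        have : k = 1 := by omega
        rw [this]
        simpa using hw
      · exfalso
        obtain ⟨h1, h2, h3, _, h5, _⟩ := hpq
        have h3' : q + 1 ≤ 2 := h3
        have hp1 : p = 1 := by omega
        rw [hp1] at h5
        simp only [show (1:ℕ) - 1 = 0 from rfl] at h5
        have h5' : P.solid t w := by simpa using h5
        exact hE.sd _ _ h5' hd
      · have hk' : k ≤ 2 := hk
        interval_cases k
        · simpa using ht
        · exfalso
          refine h1 ⟨le_rfl, show (1:ℕ) < 2 by omega, ?_⟩
          exact Or.inl ⟨by simpa using hd, by simpa using hd⟩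
        · simpa using ht
    · exact Or.inr (by simpa using hd)
    · exact Or.inr (by simpa using hd)

/-! ### Patching a collider section spanning the junction via an undirected detour -/

theorem occ_patch (hE : P.Excl) {σ ρ : P.Route} {Z : Finset V}
    (hσ : σ.IsZOpen Z) (hρ : ρ.IsZOpen Z) (hj : σ.nodes σ.len = ρ.nodes 0)
    {p₀ t₀ : ℕ}
    (hp0 : 1 ≤ p₀) (hps : p₀ ≤ σ.len)
    (hSF : P.solid (σ.nodes (p₀-1)) (σ.nodes p₀))
    (hundσ : ∀ i, p₀ ≤ i → i < σ.len → P.und (σ.nodes i) (σ.nodes (i+1)))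
    (ht0 : t₀ + 1 ≤ ρ.len)
    (hSB : P.solid (ρ.nodes (t₀+1)) (ρ.nodes t₀))
    (hundρ : ∀ i < t₀, P.und (ρ.nodes i) (ρ.nodes (i+1)))
    {e : ℕ → V} {m : ℕ} (hm : 1 ≤ m) (he0 : e 0 = ρ.nodes 0)
    (hunde : ∀ i < m, P.und (e i) (e (i+1))) (hZe : ∀ i < m, e i ∉ Z) (hZw : e m ∈ Z) :
    ∃ τ : P.Route, τ.IsZOpen Z ∧ τ.nodes 0 = σ.nodes 0 ∧ τ.nodes τ.len = ρ.nodes ρ.len := by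
  obtain ⟨a1, a2, a3⟩ := hσ
  obtain ⟨b1, b2, b3⟩ := hρ
  have hadjE : ∀ j, j < 2*m → P.adj (e (min j (2*m - j))) (e (min (j+1) (2*m - (j+1)))) := by
    intro j hj'
    by_cases hjm : j < m
    · have e1 : min j (2*m - j) = j := by omega
      have e2 : min (j+1) (2*m - (j+1)) = j + 1 := by omega
      rw [e1, e2]
      exact und_adj (hunde j hjm)
    · have e1 : min j (2*m - j) = 2*m - j := by omega
      have e2 : min (j+1) (2*m - (j+1)) = 2*m - j - 1 := by omega
      rw [e1, e2]
      have e3 : 2*m - j = (2*m - j - 1) + 1 := by omega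
      rw [e3]
      exact adj_symm (und_adj (hunde (2*m - j - 1) (by omega)))
  set M : P.Route := ⟨2*m, fun j => e (min j (2*m - j)), fun j hj' => hadjE j hj'⟩ with hMdef
  have Mn : ∀ j ≤ m, M.nodes j = e j := by
    intro j hj'
    show e (min j (2*m - j)) = e j
    congr 1
    omega
  have hMund : ∀ j, j < 2*m → P.und (M.nodes j) (M.nodes (j+1)) := by
    intro j hj'
    by_cases hjm : j < m
    · rw [Mn j (by omega), Mn (j+1) (by omega)]
      exact hunde j hjm
    · show P.und (e (min j (2*m - j))) (e (min (j+1) (2*m - (j+1))))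
      have e1 : min j (2*m - j) = 2*m - j := by omega
      have e2 : min (j+1) (2*m - (j+1)) = 2*m - j - 1 := by omega
      rw [e1, e2]
      have e3 : 2*m - j = (2*m - j - 1) + 1 := by omega
      rw [e3]
      exact und_symm (hunde (2*m - j - 1) (by omega))
  have hj₁ : σ.nodes σ.len = M.nodes 0 := by
    show _ = e (min 0 (2*m - 0))
    rw [hj, ← he0]
    congr 1
  set A : P.Route := σ.append M hj₁ with hAdef
  have hj₂ : A.nodes A.len = ρ.nodes 0 := by
    rw [Route.append_nodes_last]
    show e (min (2*m) (2*m - 2*m)) = _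
    rw [← he0]
    congr 1
    omega
  set τ : P.Route := A.append ρ hj₂ with hτdef
  have hAlen : A.len = σ.len + 2*m := rfl
  have hτlen : τ.len = σ.len + 2*m + ρ.len := rfl
  have tS : ∀ i ≤ σ.len, τ.nodes i = σ.nodes i := by
    intro i hi
    rw [Route.append_nodes_le _ _ _ (show i ≤ A.len by omega),
      Route.append_nodes_le _ _ _ hi]
  have tM : ∀ i, σ.len ≤ i → i ≤ σ.len + 2*m → τ.nodes i = M.nodes (i - σ.len) := by
    intro i h1 h2
    rw [Route.append_nodes_le _ _ _ (show i ≤ A.len by omega),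
      Route.append_nodes_ge _ _ _ h1]
  have tC : ∀ i, σ.len + 2*m ≤ i → τ.nodes i = ρ.nodes (i - (σ.len + 2*m)) := by
    intro i h1
    rw [Route.append_nodes_ge _ _ _ (show A.len ≤ i by omega)]
    congr 1
  have stepUnd : ∀ i, σ.len ≤ i → i < σ.len + 2*m → P.und (τ.nodes i) (τ.nodes (i+1)) := by
    intro i h1 h2
    rw [tM i h1 (by omega), tM (i+1) (by omega) (by omega),
      show i + 1 - σ.len = (i - σ.len) + 1 by omega]
    exact hMund (i - σ.len) (by omega)
  have hstep_last : ¬ P.dashed (σ.nodes (σ.len - 1)) (σ.nodes σ.len) := by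
    by_cases hc : p₀ = σ.len
    · have e1 : σ.len - 1 = p₀ - 1 := by omega
      rw [e1, ← hc]
      exact hE.sd _ _ hSF
    · have hu := hundσ (σ.len - 1) (by omega) (by omega)
      rw [show σ.len - 1 + 1 = σ.len by omega] at hu
      exact hE.ud _ _ hu
  have hstep_first : ¬ P.dashed (ρ.nodes 1) (ρ.nodes 0) := by
    rcases Nat.eq_zero_or_pos t₀ with h0 | h0
    · rw [h0] at hSB
      exact hE.sd _ _ hSB
    · exact hE.ud _ _ (und_symm (hundρ 0 h0))
  -- the big collider-section occurrence containing `e m`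
  have bigocc : τ.colliderSectionOcc p₀ (σ.len + 2*m + t₀) := by
    refine ⟨hp0, by omega, show σ.len + 2*m + t₀ + 1 ≤ σ.len + 2*m + ρ.len by omega,
      fun i hi hi' => ?_, ?_, ?_⟩
    · rcases lt_or_ge i σ.len with hc | hc
      · rw [tS i (by omega), tS (i+1) (by omega)]
        exact hundσ i hi hc
      · rcases lt_or_ge i (σ.len + 2*m) with hc2 | hc2
        · exact stepUnd i hc hc2
        · rw [tC i hc2, tC (i+1) (by omega),
            show i + 1 - (σ.len + 2*m) = (i - (σ.len + 2*m)) + 1 by omega]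
          exact hundρ _ (by omega)
    · rw [tS (p₀ - 1) (by omega), tS p₀ (by omega)]
      exact hSF
    · rw [tC (σ.len + 2*m + t₀ + 1) (by omega), tC (σ.len + 2*m + t₀) (by omega),
        show σ.len + 2*m + t₀ + 1 - (σ.len + 2*m) = t₀ + 1 by omega,
        show σ.len + 2*m + t₀ - (σ.len + 2*m) = t₀ by omega]
      exact hSB
  refine ⟨τ, ⟨fun k hk => ?_, fun PP QQ hpq => ?_, fun k hk h1 h2 => ?_⟩, ?_, ?_⟩
  · -- collider nodes
    have hklt : k < σ.len + 2*m + ρ.len := hk.2.1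
    rcases lt_or_ge k σ.len with hc | hc
    · have hkA := (Route.append_coll_left (show k + 1 ≤ A.len by omega)).mp hk
      have hkσ := (Route.append_coll_left (show k + 1 ≤ σ.len by omega)).mp hkA
      rw [tS k (by omega)]
      exact a1 k hkσ
    · rcases lt_or_ge k (σ.len + 2*m) with hc2 | hc2
      · exfalso
        obtain ⟨hk1, hk2, h3⟩ := hk
        rcases Nat.eq_or_lt_of_le hc with hceq | hclt
        · -- k = σ.len
          rw [← hceq] at h3
          rw [tS (σ.len - 1) (by omega), tS σ.len le_rfl,
            tM (σ.len + 1) (by omega) (by omega),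
            show σ.len + 1 - σ.len = 1 by omega, Mn 1 hm] at h3
          rcases triple_dashed h3 with hd | hd
          · exact hstep_last hd
          · rw [hj, ← he0] at hd
            exact hE.ud _ _ (und_symm (hunde 0 hm)) hd
        · have hu1 := stepUnd (k-1) (by omega) (by omega)
          rw [show k - 1 + 1 = k by omega] at hu1
          have hu2 := stepUnd k (by omega) hc2
          rcases triple_dashed h3 with hd | hd
          · exact hE.ud _ _ hu1 hd
          · exact hE.ud _ _ (und_symm hu2) hd
      · rcases Nat.eq_or_lt_of_le hc2 with hceq | hclt
        · exfalso
          obtain ⟨hk1, hk2, h3⟩ := hk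
          rw [← hceq] at h3
          have hu1 := stepUnd (σ.len + 2*m - 1) (by omega) (by omega)
          rw [show σ.len + 2*m - 1 + 1 = σ.len + 2*m by omega] at hu1
          rw [tC (σ.len + 2*m) le_rfl, Nat.sub_self] at h3 hu1
          rw [tC (σ.len + 2*m + 1) (by omega),
            show σ.len + 2*m + 1 - (σ.len + 2*m) = 1 by omega] at h3
          rcases triple_dashed h3 with hd | hd
          · exact hE.ud _ _ hu1 hd
          · exact hstep_first hd
        · have hkρ := (Route.append_coll_right (show A.len + 1 ≤ k by omega)).mp hk
          rw [tC k (by omega)]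
          exact b1 _ hkρ
  · -- collider sections
    obtain ⟨h1, h2, h3, h4, h5, h6⟩ := hpq
    have h3' : QQ + 1 ≤ σ.len + 2*m + ρ.len := h3
    by_cases hql : QQ + 1 ≤ σ.len + 2*m
    · by_cases hqs : QQ + 1 ≤ σ.len
      · have hoA := (Route.append_occ_left (show QQ + 1 ≤ A.len by omega)).mp
          ⟨h1, h2, h3, h4, h5, h6⟩
        have hoσ := (Route.append_occ_left hqs).mp hoA
        obtain ⟨m', hm1, hm2, hm3⟩ := a2 _ _ hoσ
        refine ⟨m', hm1, hm2, ?_⟩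
        rwa [tS m' (by omega)]
      · exfalso
        have hu := stepUnd QQ (by omega) (by omega)
        exact hE.us _ _ (und_symm hu) h6
    · by_cases hpr : σ.len + 2*m + 1 ≤ PP
      · have hoρ := (Route.append_occ_right (show A.len + 1 ≤ PP by omega)).mp
          ⟨h1, h2, h3, h4, h5, h6⟩
        obtain ⟨m', hm1, hm2, hm3⟩ := b2 _ _ hoρ
        have hb3 : QQ - A.len + 1 ≤ ρ.len := hoρ.2.2.1
        refine ⟨m' + (σ.len + 2*m), by omega, by omega, ?_⟩
        rw [tC _ (by omega), show m' + (σ.len + 2*m) - (σ.len + 2*m) = m' by omega]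
        exact hm3
      · have hQ : σ.len + 2*m ≤ QQ := by omega
        have hP : PP ≤ σ.len := by
          by_contra hcon
          push_neg at hcon
          have hu := stepUnd (PP - 1) (by omega) (by omega)
          rw [show PP - 1 + 1 = PP by omega] at hu
          exact hE.us _ _ hu h5
        refine ⟨σ.len + m, by omega, by omega, ?_⟩
        rw [tM (σ.len + m) (by omega) (by omega),
          show σ.len + m - σ.len = m by omega, Mn m le_rfl]
        exact hZw
  · -- condition (iii)
    have hk' : k ≤ σ.len + 2*m + ρ.len := hk
    rcases lt_or_ge k σ.len with hc | hc
    · rw [tS k (by omega)]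
      refine a3 k (by omega) (fun hcoll => ?_) (fun hocc => ?_)
      · exact h1 ((Route.append_coll_left (show k + 1 ≤ A.len by omega)).mpr
          ((Route.append_coll_left (show k + 1 ≤ σ.len by omega)).mpr hcoll))
      · obtain ⟨p, q, hoc, hp, hq⟩ := hocc
        have hb : q + 1 ≤ σ.len := hoc.2.2.1
        exact h2 ⟨p, q, (Route.append_occ_left (show q + 1 ≤ A.len by omega)).mpr
          ((Route.append_occ_left hb).mpr hoc), hp, hq⟩
    · rcases lt_or_ge (σ.len + 2*m) k with hc2 | hc2
      · rw [tC k (by omega)]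
        refine b3 (k - (σ.len + 2*m)) (by omega) (fun hcoll => ?_) (fun hocc => ?_)
        · exact h1 ((Route.append_coll_right (show A.len + 1 ≤ k by omega)).mpr hcoll)
        · obtain ⟨p, q, hoc, hp, hq⟩ := hocc
          have hb1 : 1 ≤ p := hoc.1
          have hb3 : q + 1 ≤ ρ.len := hoc.2.2.1
          refine h2 ⟨p + (σ.len + 2*m), q + (σ.len + 2*m), ?_, by omega, by omega⟩
          rw [Route.append_occ_right (show A.len + 1 ≤ p + (σ.len + 2*m) by omega)]
          have e1 : p + (σ.len + 2*m) - A.len = p := by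
            rw [hAlen]; omega
          have e2 : q + (σ.len + 2*m) - A.len = q := by
            rw [hAlen]; omega
          rwa [e1, e2]
      · by_cases hkm : k = σ.len + m
        · exact absurd ⟨p₀, σ.len + 2*m + t₀, bigocc, by omega, by omega⟩ h2
        · rw [tM k hc (by omega)]
          show e (min (k - σ.len) (2*m - (k - σ.len))) ∉ Z
          exact hZe _ (by omega)
  · rw [tS 0 (by omega)]
  · rw [hτlen, tC (σ.len + 2*m + ρ.len) (by omega)]
    congr 1
    omega

/-! ### Flaw classification for concatenation -/

theorem append_flaw (hE : P.Excl) {ρ₁ ρ₂ : P.Route} (h : ρ₁.nodes ρ₁.len = ρ₂.nodes 0)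
    {Z : Finset V} (h₁ : ρ₁.IsZOpen Z) (h₂ : ρ₂.IsZOpen Z) (hz : ρ₂.nodes 0 ∉ Z)
    (hno : ¬ (ρ₁.append ρ₂ h).IsZOpen Z) :
    P.colliderTriple (ρ₁.nodes (ρ₁.len - 1)) (ρ₂.nodes 0) (ρ₂.nodes 1) ∨
    ∃ p q, (ρ₁.append ρ₂ h).colliderSectionOcc p q ∧ p ≤ ρ₁.len ∧ ρ₁.len ≤ q := by
  by_cases hl₁ : ρ₁.len = 0
  · exact absurd (Route.append_open_zero h h₁ h₂ (Or.inl hl₁)) hno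
  by_cases hl₂ : ρ₂.len = 0
  · exact absurd (Route.append_open_zero h h₁ h₂ (Or.inr hl₂)) hno
  by_contra hcon
  rw [not_or] at hcon
  refine hno (Route.append_open_core hE h h₁ h₂ hz (by omega) (by omega) hcon.1 ?_)
  intro p q hpq hp hq
  exact hcon.2 ⟨p, q, hpq, hp, hq⟩

/-! ### Exclusivity and transfer for chain graphs and their derived graphs -/

lemma chainGraph_excl (G : ChainGraph V) : G.toPreGraph.Excl where
  us a b h h' := h.elim (fun h1 => G.undir_not_solid a b h1 h')
    (fun h1 => G.undir_not_solid a b (G.undir_symm b a h1) h')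
  ud a b h h' := h.elim (fun h1 => G.undir_not_dashed a b h1 h')
    (fun h1 => G.undir_not_dashed a b (G.undir_symm b a h1) h')
  ss := G.solid_not_solid
  sd := G.solid_not_dashed
  sd' := G.solid_not_dashed_rev
  dd := G.dashed_not_dashed

section Derived

variable [Fintype V] [DecidableEq V] {G : ChainGraph V} {U : Finset V}

lemma derived_und_sub {a b : V} (h : (G.toPreGraph.derived U).und a b) :
    G.toPreGraph.und a b :=
  h.elim (fun h1 => Or.inl h1.1) (fun h1 => Or.inr h1.1)

lemma derived_solid_sub {a b : V} (h : (G.toPreGraph.derived U).solid a b) :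
    G.toPreGraph.solid a b := h.1

lemma derived_dashed_sub {a b : V} (h : (G.toPreGraph.derived U).dashed a b) :
    G.toPreGraph.dashed a b := h.1

lemma derived_excl (G : ChainGraph V) (U : Finset V) : (G.toPreGraph.derived U).Excl where
  us a b h h' := (chainGraph_excl G).us a b (derived_und_sub h) (derived_solid_sub h')
  ud a b h h' := (chainGraph_excl G).ud a b (derived_und_sub h) (derived_dashed_sub h')
  ss a b h h' := (chainGraph_excl G).ss a b (derived_solid_sub h) (derived_solid_sub h')
  sd a b h h' := (chainGraph_excl G).sd a b (derived_solid_sub h) (derived_dashed_sub h')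
  sd' a b h h' := (chainGraph_excl G).sd' a b (derived_solid_sub h) (derived_dashed_sub h')
  dd a b h h' := (chainGraph_excl G).dd a b (derived_dashed_sub h) (derived_dashed_sub h')

lemma derived_adj_sub {a b : V} (h : (G.toPreGraph.derived U).adj a b) :
    G.toPreGraph.adj a b := by
  rcases h with h | h | h | h | h
  · exact Or.inl (derived_und_sub h)
  · exact Or.inr (Or.inl (derived_solid_sub h))
  · exact Or.inr (Or.inr (Or.inl (derived_solid_sub h)))
  · exact Or.inr (Or.inr (Or.inr (Or.inl (derived_dashed_sub h))))
  · exact Or.inr (Or.inr (Or.inr (Or.inr (derived_dashed_sub h))))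

lemma derived_adj_dashed {a b : V} (hadj : (G.toPreGraph.derived U).adj a b)
    (hd : G.toPreGraph.dashed a b) : (G.toPreGraph.derived U).dashed a b := by
  rcases hadj with h | h | h | h | h
  · exact absurd hd ((chainGraph_excl G).ud a b (derived_und_sub h))
  · exact absurd hd ((chainGraph_excl G).sd a b (derived_solid_sub h))
  · exact absurd hd ((chainGraph_excl G).sd' b a (derived_solid_sub h))
  · exact h
  · exact absurd hd ((chainGraph_excl G).dd b a (derived_dashed_sub h))

lemma derived_adj_solid {a b : V} (hadj : (G.toPreGraph.derived U).adj a b)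
    (hs : G.toPreGraph.solid a b) : (G.toPreGraph.derived U).solid a b := by
  rcases hadj with h | h | h | h | h
  · exact absurd hs ((chainGraph_excl G).us a b (derived_und_sub h))
  · exact h
  · exact absurd hs ((chainGraph_excl G).ss b a (derived_solid_sub h))
  · exact absurd (derived_dashed_sub h) ((chainGraph_excl G).sd a b hs)
  · exact absurd (derived_dashed_sub h) ((chainGraph_excl G).sd' a b hs)

lemma derived_adj_und {a b : V} (hadj : (G.toPreGraph.derived U).adj a b)
    (hu : G.toPreGraph.und a b) : (G.toPreGraph.derived U).und a b := by
  rcases hadj with h | h | h | h | h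
  · exact h
  · exact absurd (derived_solid_sub h) ((chainGraph_excl G).us a b hu)
  · exact absurd (derived_solid_sub h) ((chainGraph_excl G).us b a (und_symm hu))
  · exact absurd (derived_dashed_sub h) ((chainGraph_excl G).ud a b hu)
  · exact absurd (derived_dashed_sub h) ((chainGraph_excl G).ud b a (und_symm hu))

/-- A `Z`-open route of the derived graph yields a `Z`-open route of `G` with the same
endpoints. -/
lemma derived_open_transfer {Z : Finset V} (ρ : (G.toPreGraph.derived U).Route)
    (ho : ρ.IsZOpen Z) :
    ∃ ρ' : G.toPreGraph.Route, ρ'.len = ρ.len ∧ ρ'.nodes = ρ.nodes ∧ ρ'.IsZOpen Z := by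
  obtain ⟨o1, o2, o3⟩ := ho
  refine ⟨⟨ρ.len, ρ.nodes, fun i hi => derived_adj_sub (ρ.adj_step i hi)⟩, rfl, rfl, ?_⟩
  have tripleGH : ∀ k, 1 ≤ k → k < ρ.len →
      G.toPreGraph.colliderTriple (ρ.nodes (k-1)) (ρ.nodes k) (ρ.nodes (k+1)) →
      (G.toPreGraph.derived U).colliderTriple (ρ.nodes (k-1)) (ρ.nodes k) (ρ.nodes (k+1)) := by
    intro k hk1 hk2 htr
    have ha1 : (G.toPreGraph.derived U).adj (ρ.nodes (k-1)) (ρ.nodes k) := by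
      have h0 := ρ.adj_step (k-1) (by omega)
      rwa [show k - 1 + 1 = k by omega] at h0
    have ha2 : (G.toPreGraph.derived U).adj (ρ.nodes k) (ρ.nodes (k+1)) := ρ.adj_step k hk2
    rcases htr with ⟨h1, h2⟩ | ⟨h1, h2⟩ | ⟨h1, h2⟩ | ⟨h1, h2⟩ | ⟨h1, h2⟩
    · exact Or.inl ⟨derived_adj_dashed ha1 h1, derived_adj_dashed (adj_symm ha2) h2⟩
    · exact Or.inr (Or.inl ⟨derived_adj_dashed ha1 h1, derived_adj_und ha2 h2⟩)
    · exact Or.inr (Or.inr (Or.inl ⟨derived_adj_und ha1 h1,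
        derived_adj_dashed (adj_symm ha2) h2⟩))
    · exact Or.inr (Or.inr (Or.inr (Or.inl ⟨derived_adj_dashed ha1 h1,
        derived_adj_solid (adj_symm ha2) h2⟩)))
    · exact Or.inr (Or.inr (Or.inr (Or.inr ⟨derived_adj_solid ha1 h1,
        derived_adj_dashed (adj_symm ha2) h2⟩)))
  have tripleHG : ∀ u c v, (G.toPreGraph.derived U).colliderTriple u c v →
      G.toPreGraph.colliderTriple u c v := by
    intro u c v htr
    rcases htr with ⟨h1, h2⟩ | ⟨h1, h2⟩ | ⟨h1, h2⟩ | ⟨h1, h2⟩ | ⟨h1, h2⟩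
    · exact Or.inl ⟨derived_dashed_sub h1, derived_dashed_sub h2⟩
    · exact Or.inr (Or.inl ⟨derived_dashed_sub h1, derived_und_sub h2⟩)
    · exact Or.inr (Or.inr (Or.inl ⟨derived_und_sub h1, derived_dashed_sub h2⟩))
    · exact Or.inr (Or.inr (Or.inr (Or.inl ⟨derived_dashed_sub h1, derived_solid_sub h2⟩)))
    · exact Or.inr (Or.inr (Or.inr (Or.inr ⟨derived_solid_sub h1, derived_dashed_sub h2⟩)))
  refine ⟨fun k hk => ?_, fun p q hpq => ?_, fun k hk h1 h2 => ?_⟩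
  · obtain ⟨hk1, hk2, htr⟩ := hk
    exact o1 k ⟨hk1, hk2, tripleGH k hk1 hk2 htr⟩
  · obtain ⟨h1, h2, h3, h4, h5, h6⟩ := hpq
    have h3' : q + 1 ≤ ρ.len := h3
    refine o2 p q ⟨h1, h2, h3, fun mm hm hm' => ?_, ?_, ?_⟩
    · exact derived_adj_und (ρ.adj_step mm (by omega)) (h4 mm hm hm')
    · have ha' := ρ.adj_step (p-1) (by omega)
      rw [show p - 1 + 1 = p by omega] at ha'
      exact derived_adj_solid ha' h5
    · exact derived_adj_solid (adj_symm (ρ.adj_step q (by omega))) h6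
  · refine o3 k hk (fun hc => h1 ?_) (fun hc => h2 ?_)
    · obtain ⟨hk1, hk2, htr⟩ := hc
      exact ⟨hk1, hk2, tripleHG _ _ _ htr⟩
    · obtain ⟨p, q, ⟨h1', h2', h3', h4', h5', h6'⟩, hp, hq⟩ := hc
      exact ⟨p, q, ⟨h1', h2', h3', fun mm hm hm' => derived_und_sub (h4' mm hm hm'),
        derived_solid_sub h5', derived_solid_sub h6'⟩, hp, hq⟩

/-- Every edge traversed by a good route is an edge of the derived graph. -/
lemma good_steps {f : ℕ → V} {n : ℕ}
    (hfwd : ∀ i < n, G.toPreGraph.fwd (f i) (f (i+1)))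
    (hdu : ∀ i, i + 2 ≤ n →
      ¬ (G.toPreGraph.dashed (f i) (f (i+1)) ∧ G.toPreGraph.und (f (i+1)) (f (i+2))))
    (hU : f n ∈ U) :
    ∀ i < n, (G.toPreGraph.derived U).und (f i) (f (i+1)) ∨
      (G.toPreGraph.derived U).solid (f i) (f (i+1)) ∨
      (G.toPreGraph.derived U).dashed (f i) (f (i+1)) := by
  intro i hi
  have hgood : G.toPreGraph.goodFrom U (f i) (f (i+1)) := by
    refine ⟨fun j => f (i + j), n - i, by omega, rfl, rfl, ?_, fun j hj => ?_, fun j hj => ?_⟩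
    · show f (i + (n - i)) ∈ U
      rw [show i + (n - i) = n by omega]
      exact hU
    · exact hfwd (i + j) (by omega)
    · exact hdu (i + j) (by omega)
  rcases hfwd i hi with hu | hs | hd
  · rcases hu with h1 | h1
    · exact Or.inl (Or.inl ⟨h1, hgood⟩)
    · set g : ℕ → V := fun j => if j = 0 then f (i+1) else f (i + j - 1) with hgdef
      have hg0 : g 0 = f (i + 1) := if_pos rfl
      have hgp : ∀ j, 1 ≤ j → g j = f (i + j - 1) := fun j hj => if_neg (by omega)
      refine Or.inl (Or.inr ⟨h1, ⟨g, n - i + 1, by omega, hg0, ?_, ?_, fun j hj => ?_,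
        fun j hj => ?_⟩⟩)
      · rw [hgp 1 le_rfl, show i + 1 - 1 = i by omega]
      · rw [hgp (n - i + 1) (by omega), show i + (n - i + 1) - 1 = n by omega]
        exact hU
      · rcases Nat.eq_zero_or_pos j with h0 | h0
        · subst h0
          rw [hg0, hgp 1 le_rfl, show i + 1 - 1 = i by omega]
          exact Or.inl (Or.inl h1)
        · rw [hgp j h0, hgp (j+1) (by omega), show i + (j+1) - 1 = (i + j - 1) + 1 by omega]
          exact hfwd (i + j - 1) (by omega)
      · rcases Nat.eq_zero_or_pos j with h0 | h0
        · subst h0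
          rw [hg0, hgp 1 le_rfl, show i + 1 - 1 = i by omega]
          rintro ⟨hd', -⟩
          exact (chainGraph_excl G).ud _ _ (Or.inl h1) hd'
        · rw [hgp j h0, hgp (j+1) (by omega), hgp (j+2) (by omega),
            show i + (j+1) - 1 = (i + j - 1) + 1 by omega,
            show i + (j+2) - 1 = (i + j - 1) + 2 by omega]
          exact hdu (i + j - 1) (by omega)
  · exact Or.inr (Or.inl ⟨hs, hgood⟩)
  · exact Or.inr (Or.inr ⟨hd, hgood⟩)

/-- From a good route `x ⊸ a ⊸ ⋯ ⊸ U` with `a ∉ U`, extract a descending route of the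
derived graph starting at `a`. -/
lemma goodFrom_descent {x a : V} (ha : a ∉ U) (hg : G.toPreGraph.goodFrom U x a) :
    ∃ (g : ℕ → V) (n : ℕ), 1 ≤ n ∧ g 0 = a ∧ g n ∈ U ∧
      (∀ i < n, (G.toPreGraph.derived U).und (g i) (g (i+1)) ∨
        (G.toPreGraph.derived U).solid (g i) (g (i+1)) ∨
        (G.toPreGraph.derived U).dashed (g i) (g (i+1))) ∧
      (∀ i, i + 2 ≤ n → ¬ ((G.toPreGraph.derived U).dashed (g i) (g (i+1)) ∧
        (G.toPreGraph.derived U).und (g (i+1)) (g (i+2)))) ∧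
      (G.toPreGraph.dashed x a → ((G.toPreGraph.derived U).solid (g 0) (g 1) ∨
        (G.toPreGraph.derived U).dashed (g 0) (g 1))) := by
  obtain ⟨f, n, hn, hf0, hf1, hfU, hfwd, hdu⟩ := hg
  have hn2 : 2 ≤ n := by
    rcases Nat.eq_or_lt_of_le hn with h1 | h1
    · exfalso
      apply ha
      rw [← h1] at hfU
      rwa [hf1] at hfU
    · omega
  have hsteps := good_steps hfwd hdu hfU
  refine ⟨fun j => f (j + 1), n - 1, by omega, hf1, ?_, fun i hi => ?_, fun i hi => ?_,
    fun hd => ?_⟩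
  · show f (n - 1 + 1) ∈ U
    rw [show n - 1 + 1 = n by omega]
    exact hfU
  · exact hsteps (i + 1) (by omega)
  · rintro ⟨hd', hu'⟩
    exact hdu (i + 1) (by omega) ⟨derived_dashed_sub hd', derived_und_sub hu'⟩
  · have hstep0 := hsteps 1 (by omega)
    rcases hstep0 with hu | hrest
    · exfalso
      refine hdu 0 (by omega) ⟨by rwa [hf0, hf1], derived_und_sub hu⟩
    · exact hrest

/-- From an edge of the derived graph into a node `a ∉ U`, extract a descending route
starting at `a`; if the edge is dashed, the first step is directed. -/
lemma descent_of_edge {c a : V} (ha : a ∉ U)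
    (hedge : (G.toPreGraph.derived U).und c a ∨ (G.toPreGraph.derived U).solid c a ∨
      (G.toPreGraph.derived U).dashed c a) :
    ∃ (g : ℕ → V) (n : ℕ), 1 ≤ n ∧ g 0 = a ∧ g n ∈ U ∧
      (∀ i < n, (G.toPreGraph.derived U).und (g i) (g (i+1)) ∨
        (G.toPreGraph.derived U).solid (g i) (g (i+1)) ∨
        (G.toPreGraph.derived U).dashed (g i) (g (i+1))) ∧
      (∀ i, i + 2 ≤ n → ¬ ((G.toPreGraph.derived U).dashed (g i) (g (i+1)) ∧
        (G.toPreGraph.derived U).und (g (i+1)) (g (i+2)))) ∧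
      ((G.toPreGraph.derived U).dashed c a →
        ((G.toPreGraph.derived U).solid (g 0) (g 1) ∨
         (G.toPreGraph.derived U).dashed (g 0) (g 1))) := by
  rcases hedge with (h | h) | h | h
  · obtain ⟨h1, h2⟩ := h
    obtain ⟨g, n, p1, p2, p3, p4, p5, p6⟩ := goodFrom_descent ha h2
    exact ⟨g, n, p1, p2, p3, p4, p5,
      fun hd => absurd (derived_dashed_sub hd) ((chainGraph_excl G).ud c a (Or.inl h1))⟩
  · obtain ⟨h1, h2⟩ := h
    obtain ⟨f, n, hn, hf0, hf1, hfU, hfwd, hdu⟩ := h2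
    have hsteps := good_steps hfwd hdu hfU
    refine ⟨f, n, hn, hf0, hfU, fun i hi => hsteps i hi, fun i hi => ?_,
      fun hd => absurd (derived_dashed_sub hd) ((chainGraph_excl G).ud c a (Or.inr h1))⟩
    rintro ⟨hd', hu'⟩
    exact hdu i hi ⟨derived_dashed_sub hd', derived_und_sub hu'⟩
  · obtain ⟨h1, h2⟩ := h
    obtain ⟨g, n, p1, p2, p3, p4, p5, p6⟩ := goodFrom_descent ha h2
    exact ⟨g, n, p1, p2, p3, p4, p5,
      fun hd => absurd (derived_dashed_sub hd) ((chainGraph_excl G).sd c a h1)⟩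
  · obtain ⟨h1, h2⟩ := h
    obtain ⟨g, n, p1, p2, p3, p4, p5, p6⟩ := goodFrom_descent ha h2
    exact ⟨g, n, p1, p2, p3, p4, p5, fun _ => p6 h1⟩

end Derived

/-! ### The assembly lemma: splicing a descending detour at the junction -/

theorem assemble (hE : P.Excl) {Z X Y : Finset V} {σ ρ : P.Route}
    (hσ : σ.IsZOpen Z) (hρ : ρ.IsZOpen Z) (hj : σ.nodes σ.len = ρ.nodes 0)
    (ha : ρ.nodes 0 ∉ Z) (hx : σ.nodes 0 ∈ X)
    {g : ℕ → V} {n : ℕ} (hn : 1 ≤ n) (hg0 : g 0 = ρ.nodes 0)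
    (hfwd : ∀ i < n, P.und (g i) (g (i+1)) ∨ P.solid (g i) (g (i+1)) ∨
      P.dashed (g i) (g (i+1)))
    (hdu : ∀ i, i + 2 ≤ n → ¬ (P.dashed (g i) (g (i+1)) ∧ P.und (g (i+1)) (g (i+2))))
    (hdir : P.solid (g 0) (g 1) ∨ P.dashed (g 0) (g 1))
    (hlast : g n ∈ X ∨ g n ∈ Y ∨ g n ∈ Z) :
    (∃ τ : P.Route, τ.IsZOpen Z ∧ τ.nodes 0 ∈ X ∧ τ.nodes τ.len = ρ.nodes ρ.len) ∨
    (∃ τ : P.Route, τ.IsZOpen Z ∧ τ.nodes 0 ∈ X ∧ τ.nodes τ.len ∈ Y) := by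
  have hadj : ∀ i < n, P.adj (g i) (g (i+1)) := by
    intro i hi
    rcases hfwd i hi with h | h | h
    · exact und_adj h
    · exact solid_adj h
    · exact dashed_adj h
  by_cases hZd : ∃ i, i ≤ n ∧ g i ∈ Z
  · -- there is a Z node on the descent: bounce at the first one
    have hmspec : Nat.find hZd ≤ n ∧ g (Nat.find hZd) ∈ Z := Nat.find_spec hZd
    set m := Nat.find hZd with hmdef
    have hmn : m ≤ n := hmspec.1
    have hmnZ : ∀ j < m, g j ∉ Z := fun j hjm hmem =>
      (Nat.find_min hZd hjm) ⟨by omega, hmem⟩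
    have hm1 : 1 ≤ m := by
      rcases Nat.eq_zero_or_pos m with h0 | h0
      · exfalso
        have h1 := hmspec.2
        rw [h0, hg0] at h1
        exact ha h1
      · exact h0
    have hrex : ∃ j, ∀ i, j ≤ i → i < m → P.und (g i) (g (i+1)) :=
      ⟨m, fun i hi hi' => absurd hi' (by omega)⟩
    have hrspec : ∀ i, Nat.find hrex ≤ i → i < m → P.und (g i) (g (i+1)) :=
      Nat.find_spec hrex
    set r := Nat.find hrex with hrdef
    have hrle : r ≤ m := Nat.find_le (fun i hi hi' => absurd hi' (by omega))
    have hr1 : 1 ≤ r := by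
      rcases Nat.eq_zero_or_pos r with h0 | h0
      · exfalso
        have hu := hrspec 0 (by omega) (by omega)
        rcases hdir with hs | hd
        · exact hE.us _ _ hu hs
        · exact hE.ud _ _ hu hd
      · exact h0
    have hrstep : ¬ P.und (g (r-1)) (g r) := by
      intro hu
      have hall : ∀ i, r - 1 ≤ i → i < m → P.und (g i) (g (i+1)) := by
        intro i hi hi'
        rcases Nat.eq_or_lt_of_le hi with he | hlt
        · rw [← he, show r - 1 + 1 = r by omega]
          exact hu
        · exact hrspec i (by omega) hi'
      exact absurd hall (Nat.find_min hrex (by omega : r - 1 < r))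
    have hdirstep : P.solid (g (r-1)) (g r) ∨ P.dashed (g (r-1)) (g r) := by
      have h0 := hfwd (r-1) (by omega)
      rw [show r - 1 + 1 = r by omega] at h0
      rcases h0 with h | h | h
      · exact absurd h hrstep
      · exact Or.inl h
      · exact Or.inr h
    obtain ⟨B, hBopen, hBlen, hB0, hBlast, hBoutF, hBoutL⟩ :
        ∃ B : P.Route, B.IsZOpen Z ∧ 1 ≤ B.len ∧ B.nodes 0 = g (r-1) ∧
          B.nodes B.len = g (r-1) ∧ B.outFirst ∧ B.outLast := by
      rcases Nat.eq_or_lt_of_le hrle with he | hlt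
      · rw [he]
        rw [he] at hdirstep
        exact bounce_exists hE hdirstep (hmnZ (m-1) (by omega)) hmspec.2
      · have hsol : P.solid (g (r-1)) (g r) := by
          rcases hdirstep with h | h
          · exact h
          · exfalso
            have hu := hrspec r le_rfl hlt
            refine hdu (r-1) (by omega) ⟨?_, ?_⟩
            · rwa [show r - 1 + 1 = r by omega]
            · rwa [show r - 1 + 1 = r by omega, show r - 1 + 2 = r + 1 by omega]
        obtain ⟨B, b1, b2, b3, b4, b5, b6⟩ := run_bounce hE
          (e := fun j => g (r - 1 + j)) (m := m - r + 1) (by omega)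
          (by show P.solid (g (r-1+0)) (g (r-1+1))
              rw [Nat.add_zero, show r - 1 + 1 = r by omega]
              exact hsol)
          (fun i hi1 hi2 => by
            show P.und (g (r-1+i)) (g (r-1+i+1))
            exact hrspec (r-1+i) (by omega) (by omega))
          (fun i hi => hmnZ (r-1+i) (by omega))
          (by show g (r-1+(m-r+1)) ∈ Z
              rw [show r - 1 + (m - r + 1) = m by omega]
              exact hmspec.2)
        refine ⟨B, b1, b2, ?_, ?_, b5, b6⟩
        · rw [b3]
          show g (r-1+0) = g (r-1)
          rw [Nat.add_zero]
        · rw [b4]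
          show g (r-1+0) = g (r-1)
          rw [Nat.add_zero]
    set δpre : P.Route := ⟨r - 1, g, fun i hi => hadj i (by
      have hi' : i < r - 1 := hi
      omega)⟩ with hδpredef
    have hδpreopen : δpre.IsZOpen Z :=
      Route.desc_open hE
        (fun i hi => hfwd i (by have hi' : i < r - 1 := hi; omega))
        (fun i hi => hdu i (by have hi' : i + 2 ≤ r - 1 := hi; omega))
        (fun i hi => hmnZ i (by have hi' : i ≤ r - 1 := hi; omega))
    have hjθ1 : δpre.reverse.nodes δpre.reverse.len = ρ.nodes 0 := by
      rw [Route.reverse_nodes_last]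
      exact hg0
    set θ1 := δpre.reverse.append ρ hjθ1 with hθ1def
    have hθ1open : θ1.IsZOpen Z := by
      by_cases hr1' : r - 1 = 0
      · exact Route.append_open_zero hjθ1 (Route.reverse_open hδpreopen) hρ (Or.inl hr1')
      · refine Route.append_open_out hE hjθ1 (Route.reverse_open hδpreopen) hρ ha
          (Or.inl ?_)
        unfold Route.outLast
        have e1 : δpre.reverse.nodes δpre.reverse.len = g 0 := by
          show g (r - 1 - (r - 1)) = g 0
          rw [Nat.sub_self]
        have e2 : δpre.reverse.nodes (δpre.reverse.len - 1) = g 1 := by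
          show g (r - 1 - (r - 1 - 1)) = g 1
          congr 1
          omega
        rw [e1, e2]
        exact hdir
    have hθ1zero : θ1.nodes 0 = g (r - 1) := by
      rw [hθ1def, Route.append_nodes_zero, Route.reverse_nodes_zero]
    have hθ1last : θ1.nodes θ1.len = ρ.nodes ρ.len := by
      rw [hθ1def, Route.append_nodes_last]
    have hjθ2 : B.nodes B.len = θ1.nodes 0 := by rw [hBlast, hθ1zero]
    set θ2 := B.append θ1 hjθ2 with hθ2def
    have hθ2open : θ2.IsZOpen Z :=
      Route.append_open_out hE hjθ2 hBopen hθ1open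
        (by rw [hθ1zero]; exact hmnZ (r-1) (by omega)) (Or.inl hBoutL)
    have hθ2zero : θ2.nodes 0 = g (r - 1) := by
      rw [hθ2def, Route.append_nodes_zero, hB0]
    have hθ2last : θ2.nodes θ2.len = ρ.nodes ρ.len := by
      rw [hθ2def, Route.append_nodes_last]
      exact hθ1last
    have hθ2outF : θ2.outFirst := by
      unfold Route.outFirst at hBoutF ⊢
      have e1 : θ2.nodes 0 = B.nodes 0 := by rw [hθ2def, Route.append_nodes_zero]
      have e2 : θ2.nodes 1 = B.nodes 1 := by
        rw [hθ2def]
        exact Route.append_nodes_le _ _ _ (by omega)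
      rw [e1, e2]
      exact hBoutF
    have hjθ3 : δpre.nodes δpre.len = θ2.nodes 0 := by
      rw [hθ2zero]
    set θ3 := δpre.append θ2 hjθ3 with hθ3def
    have hθ3open : θ3.IsZOpen Z :=
      Route.append_open_out hE hjθ3 hδpreopen hθ2open
        (by rw [hθ2zero]; exact hmnZ (r-1) (by omega)) (Or.inr hθ2outF)
    have hθ3zero : θ3.nodes 0 = g 0 := by
      rw [hθ3def, Route.append_nodes_zero]
    have hθ3last : θ3.nodes θ3.len = ρ.nodes ρ.len := by
      rw [hθ3def, Route.append_nodes_last]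
      exact hθ2last
    have hθ3outF : θ3.outFirst := by
      unfold Route.outFirst
      by_cases hr1' : r - 1 = 0
      · have e1 : θ3.nodes 0 = θ2.nodes 0 := by
          rw [hθ3zero, hθ2zero]
          congr 1
          omega
        have e2 : θ3.nodes 1 = θ2.nodes 1 := by
          rw [hθ3def, Route.append_nodes_ge _ _ _ (show δpre.len ≤ 1 by
            show r - 1 ≤ 1; omega)]
          congr 1
          show 1 - (r - 1) = 1
          omega
        rw [e1, e2]
        exact hθ2outF
      · have e1 : θ3.nodes 0 = g 0 := hθ3zero
        have e2 : θ3.nodes 1 = g 1 := by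
          rw [hθ3def]
          exact Route.append_nodes_le _ _ _ (show 1 ≤ δpre.len by show 1 ≤ r - 1; omega)
        rw [e1, e2]
        exact hdir
    have hjτ : σ.nodes σ.len = θ3.nodes 0 := by
      rw [hθ3zero, hj]
      exact hg0.symm
    left
    refine ⟨σ.append θ3 hjτ, ?_, ?_, ?_⟩
    · refine Route.append_open_out hE hjτ hσ hθ3open ?_ (Or.inr hθ3outF)
      rw [hθ3zero, hg0]
      exact ha
    · rw [Route.append_nodes_zero]
      exact hx
    · rw [Route.append_nodes_last]
      exact hθ3last
  · -- no Z node on the descent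
    push_neg at hZd
    set δ : P.Route := ⟨n, g, fun i hi => hadj i hi⟩ with hδdef
    have hδopen : δ.IsZOpen Z :=
      Route.desc_open hE (fun i hi => hfwd i hi) (fun i hi => hdu i hi)
        (fun i hi => hZd i hi)
    have hgnZ : g n ∉ Z := hZd n le_rfl
    rcases hlast with hX | hY | hZ'
    · left
      have hjr : δ.reverse.nodes δ.reverse.len = ρ.nodes 0 := by
        rw [Route.reverse_nodes_last]
        exact hg0
      refine ⟨δ.reverse.append ρ hjr, ?_, ?_, ?_⟩
      · refine Route.append_open_out hE hjr (Route.reverse_open hδopen) hρ ha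
          (Or.inl ?_)
        unfold Route.outLast
        have e1 : δ.reverse.nodes δ.reverse.len = g 0 := by
          show g (n - n) = g 0
          rw [Nat.sub_self]
        have e2 : δ.reverse.nodes (δ.reverse.len - 1) = g 1 := by
          show g (n - (n - 1)) = g 1
          congr 1
          omega
        rw [e1, e2]
        exact hdir
      · rw [Route.append_nodes_zero, Route.reverse_nodes_zero]
        exact hX
      · rw [Route.append_nodes_last]
    · right
      have hjσ : σ.nodes σ.len = δ.nodes 0 := by
        rw [hj]
        exact hg0.symm
      refine ⟨σ.append δ hjσ, ?_, ?_, ?_⟩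
      · refine Route.append_open_out hE hjσ hσ hδopen ?_ (Or.inr hdir)
        show g 0 ∉ Z
        rw [hg0]
        exact ha
      · rw [Route.append_nodes_zero]
        exact hx
      · rw [Route.append_nodes_last]
        exact hY
    · exact absurd hZ' hgnZ

end PreGraph

end Lemma2Aux

/-- **Lemma 2.** If `X ⊥_G Y | Z` in a UCG `G`, then `X' ⊥_{G^{X∪Y∪Z}} Y' | Z`, where
`Y' = {B' ∈ V(G^{X∪Y∪Z}) ∖ (X ∪ Z) : X ⊥_{G^{X∪Y∪Z}} B' | Z}` and
`X' = V(G^{X∪Y∪Z}) ∖ (Y' ∪ Z)`. -/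
theorem extension_of_separation
    {V : Type*} [Fintype V] [DecidableEq V] (G : ChainGraph V) (hG : G.IsUCG)
    (X Y Z : Finset V) (hd : PDisj X Y Z) (hsep : G.toPreGraph.Sep X Y Z) :
    (G.toPreGraph.derived (X ∪ Y ∪ Z)).Sep
      (G.toPreGraph.derivedXp X Y Z) (G.toPreGraph.derivedYp X Y Z) Z := by
  have hE := PreGraph.derived_excl G (X ∪ Y ∪ Z)
  have key : ∀ ρ : (G.toPreGraph.derived (X ∪ Y ∪ Z)).Route, ρ.IsZOpen Z →
      ρ.nodes 0 ∈ G.toPreGraph.derivedXp X Y Z →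
      ρ.nodes ρ.len ∈ G.toPreGraph.derivedYp X Y Z → False := by
    intro ρ hρopen ha' hb'
    simp only [PreGraph.derivedYp, Finset.mem_filter, Finset.mem_sdiff,
      Finset.mem_union] at hb'
    obtain ⟨⟨hbV, hbXZ⟩, hbSep⟩ := hb'
    simp only [PreGraph.derivedXp, Finset.mem_sdiff, Finset.mem_union] at ha'
    obtain ⟨haV, haNot⟩ := ha'
    have haY' : ρ.nodes 0 ∉ G.toPreGraph.derivedYp X Y Z := fun h => haNot (Or.inl h)
    have haZ : ρ.nodes 0 ∉ Z := fun h => haNot (Or.inr h)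
    have contra1 : ∀ τ : (G.toPreGraph.derived (X ∪ Y ∪ Z)).Route, τ.IsZOpen Z →
        τ.nodes 0 ∈ X → τ.nodes τ.len = ρ.nodes ρ.len → False := by
      intro τ ho h0 hl
      exact hbSep ⟨τ, Or.inl ⟨h0, by rw [hl]; exact Finset.mem_singleton_self _⟩, ho⟩
    have contra2 : ∀ τ : (G.toPreGraph.derived (X ∪ Y ∪ Z)).Route, τ.IsZOpen Z →
        τ.nodes 0 ∈ X → τ.nodes τ.len ∈ Y → False := by
      intro τ ho h0 hl
      obtain ⟨τ', e1, e2, ho'⟩ := PreGraph.derived_open_transfer τ ho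
      exact hsep ⟨τ', Or.inl ⟨by rw [e2]; exact h0, by rw [e2, e1]; exact hl⟩, ho'⟩
    by_cases haX : ρ.nodes 0 ∈ X
    · exact contra1 ρ hρopen haX rfl
    have haSep : ¬ (G.toPreGraph.derived (X ∪ Y ∪ Z)).Sep X {ρ.nodes 0} Z := by
      intro hS
      apply haY'
      simp only [PreGraph.derivedYp, Finset.mem_filter, Finset.mem_sdiff,
        Finset.mem_union]
      exact ⟨⟨haV, fun h => h.elim haX haZ⟩, hS⟩
    obtain ⟨σ0, hσ0end, hσ0open⟩ := not_not.mp haSep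
    obtain ⟨σ, hσopen, hσ0, hσlast⟩ :
        ∃ σ : (G.toPreGraph.derived (X ∪ Y ∪ Z)).Route, σ.IsZOpen Z ∧
          σ.nodes 0 ∈ X ∧ σ.nodes σ.len = ρ.nodes 0 := by
      rcases hσ0end with ⟨h1, h2⟩ | ⟨h1, h2⟩
      · exact ⟨σ0, hσ0open, h1, Finset.mem_singleton.mp h2⟩
      · refine ⟨σ0.reverse, PreGraph.Route.reverse_open hσ0open, ?_, ?_⟩
        · rw [PreGraph.Route.reverse_nodes_zero]
          exact h2
        · rw [PreGraph.Route.reverse_nodes_last]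
          exact Finset.mem_singleton.mp h1
    by_cases haYm : ρ.nodes 0 ∈ Y
    · obtain ⟨σ', e1, e2, hσ'open⟩ := PreGraph.derived_open_transfer σ hσopen
      refine hsep ⟨σ', Or.inl ⟨?_, ?_⟩, hσ'open⟩
      · rw [e2]; exact hσ0
      · rw [e2, e1, hσlast]; exact haYm
    have haU : ρ.nodes 0 ∉ X ∪ Y ∪ Z := by
      simp only [Finset.mem_union]
      rintro ((h | h) | h)
      · exact haX h
      · exact haYm h
      · exact haZ h
    have hj : σ.nodes σ.len = ρ.nodes 0 := hσlast
    by_cases hdirect : (σ.append ρ hj).IsZOpen Z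
    · exact contra1 _ hdirect
        (by rw [PreGraph.Route.append_nodes_zero]; exact hσ0)
        (PreGraph.Route.append_nodes_last _ _ _)
    rcases PreGraph.append_flaw hE hj hσopen hρopen haZ hdirect with
      htriple | ⟨p, q, hocc, hp, hq⟩
    · -- a collider at the junction: there is a dashed edge into the junction node
      obtain ⟨gg, nn, hn1, hgg0, hgU, hgfwd, hgdu, hgdir⟩ :
          ∃ (gg : ℕ → V) (nn : ℕ), 1 ≤ nn ∧ gg 0 = ρ.nodes 0 ∧
            (gg nn ∈ X ∨ gg nn ∈ Y ∨ gg nn ∈ Z) ∧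
            (∀ i < nn, (G.toPreGraph.derived (X ∪ Y ∪ Z)).und (gg i) (gg (i+1)) ∨
              (G.toPreGraph.derived (X ∪ Y ∪ Z)).solid (gg i) (gg (i+1)) ∨
              (G.toPreGraph.derived (X ∪ Y ∪ Z)).dashed (gg i) (gg (i+1))) ∧
            (∀ i, i + 2 ≤ nn →
              ¬ ((G.toPreGraph.derived (X ∪ Y ∪ Z)).dashed (gg i) (gg (i+1)) ∧
                (G.toPreGraph.derived (X ∪ Y ∪ Z)).und (gg (i+1)) (gg (i+2)))) ∧
            ((G.toPreGraph.derived (X ∪ Y ∪ Z)).solid (gg 0) (gg 1) ∨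
              (G.toPreGraph.derived (X ∪ Y ∪ Z)).dashed (gg 0) (gg 1)) := by
        rcases PreGraph.triple_dashed htriple with hdash | hdash
        · obtain ⟨gg, nn, p1, p2, p3, p4, p5, p6⟩ :=
            PreGraph.descent_of_edge haU (Or.inr (Or.inr hdash))
          refine ⟨gg, nn, p1, p2, ?_, p4, p5, p6 hdash⟩
          rcases Finset.mem_union.mp p3 with h' | h'
          · rcases Finset.mem_union.mp h' with h'' | h''
            · exact Or.inl h''
            · exact Or.inr (Or.inl h'')
          · exact Or.inr (Or.inr h')
        · obtain ⟨gg, nn, p1, p2, p3, p4, p5, p6⟩ :=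
            PreGraph.descent_of_edge haU (Or.inr (Or.inr hdash))
          refine ⟨gg, nn, p1, p2, ?_, p4, p5, p6 hdash⟩
          rcases Finset.mem_union.mp p3 with h' | h'
          · rcases Finset.mem_union.mp h' with h'' | h''
            · exact Or.inl h''
            · exact Or.inr (Or.inl h'')
          · exact Or.inr (Or.inr h')
      rcases PreGraph.assemble hE hσopen hρopen hj haZ hσ0 hn1 hgg0 hgfwd hgdu hgdir hgU
        with ⟨τ, h1, h2, h3⟩ | ⟨τ, h1, h2, h3⟩
      · exact contra1 τ h1 h2 h3
      · exact contra2 τ h1 h2 h3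
    · -- a collider section spans the junction
      obtain ⟨ho1, ho2, ho3, ho4, ho5, ho6⟩ := hocc
      have ho3' : q + 1 ≤ σ.len + ρ.len := ho3
      have hSF : (G.toPreGraph.derived (X ∪ Y ∪ Z)).solid (σ.nodes (p-1)) (σ.nodes p) := by
        have e1 : (σ.append ρ hj).nodes (p-1) = σ.nodes (p-1) :=
          PreGraph.Route.append_nodes_le _ _ _ (by omega)
        have e2 : (σ.append ρ hj).nodes p = σ.nodes p :=
          PreGraph.Route.append_nodes_le _ _ _ hp
        rwa [e1, e2] at ho5
      have hundσ' : ∀ i, p ≤ i → i < σ.len →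
          (G.toPreGraph.derived (X ∪ Y ∪ Z)).und (σ.nodes i) (σ.nodes (i+1)) := by
        intro i h1 h2
        have h4 := ho4 i h1 (by omega)
        rwa [PreGraph.Route.append_nodes_le _ _ _ (by omega),
          PreGraph.Route.append_nodes_le _ _ _ (by omega)] at h4
      have hSB : (G.toPreGraph.derived (X ∪ Y ∪ Z)).solid
          (ρ.nodes (q - σ.len + 1)) (ρ.nodes (q - σ.len)) := by
        have e1 : (σ.append ρ hj).nodes (q+1) = ρ.nodes (q - σ.len + 1) := by
          rw [PreGraph.Route.append_nodes_ge _ _ _ (by omega)]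
          congr 1
          omega
        have e2 : (σ.append ρ hj).nodes q = ρ.nodes (q - σ.len) :=
          PreGraph.Route.append_nodes_ge _ _ _ hq
        rwa [e1, e2] at ho6
      have hundρ' : ∀ i, i < q - σ.len →
          (G.toPreGraph.derived (X ∪ Y ∪ Z)).und (ρ.nodes i) (ρ.nodes (i+1)) := by
        intro i h1
        have h4 := ho4 (σ.len + i) (by omega) (by omega)
        have e1 : (σ.append ρ hj).nodes (σ.len + i) = ρ.nodes i := by
          rw [PreGraph.Route.append_nodes_ge _ _ _ (by omega)]
          congr 1
          omega
        have e2 : (σ.append ρ hj).nodes (σ.len + i + 1) = ρ.nodes (i+1) := by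
          rw [PreGraph.Route.append_nodes_ge _ _ _ (by omega)]
          congr 1
          omega
        rwa [e1, e2] at h4
      have hnd1 : ¬ (G.toPreGraph.derived (X ∪ Y ∪ Z)).dashed
          (σ.nodes (σ.len - 1)) (σ.nodes σ.len) := by
        by_cases hps : p = σ.len
        · have hSF' := hSF
          rw [hps] at hSF'
          exact hE.sd _ _ hSF'
        · have hu := hundσ' (σ.len - 1) (by omega) (by omega)
          rw [show σ.len - 1 + 1 = σ.len by omega] at hu
          exact hE.ud _ _ hu
      have hnd2 : ¬ (G.toPreGraph.derived (X ∪ Y ∪ Z)).dashed (ρ.nodes 1) (ρ.nodes 0) := by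
        rcases Nat.eq_zero_or_pos (q - σ.len) with h0 | h0
        · have hSB' := hSB
          rw [h0] at hSB'
          exact hE.sd _ _ hSB'
        · exact hE.ud _ _ (PreGraph.und_symm (hundρ' 0 h0))
      have hedge : (G.toPreGraph.derived (X ∪ Y ∪ Z)).und (σ.nodes (σ.len - 1)) (ρ.nodes 0) ∨
          (G.toPreGraph.derived (X ∪ Y ∪ Z)).solid (σ.nodes (σ.len - 1)) (ρ.nodes 0) ∨
          (G.toPreGraph.derived (X ∪ Y ∪ Z)).dashed (σ.nodes (σ.len - 1)) (ρ.nodes 0) := by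
        by_cases hps : p = σ.len
        · refine Or.inr (Or.inl ?_)
          have hSF' := hSF
          rw [hps, hj] at hSF'
          exact hSF'
        · refine Or.inl ?_
          have hu := hundσ' (σ.len - 1) (by omega) (by omega)
          rwa [show σ.len - 1 + 1 = σ.len by omega, hj] at hu
      obtain ⟨gg, nn, hn1, hgg0, hgU, hgfwd, hgdu, -⟩ :=
        PreGraph.descent_of_edge haU hedge
      have hlex : ∃ j, j = nn ∨ ¬ (G.toPreGraph.derived (X ∪ Y ∪ Z)).und (gg j) (gg (j+1)) :=
        ⟨nn, Or.inl rfl⟩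
      have hlspec := Nat.find_spec hlex
      set ℓ := Nat.find hlex with hldef
      have hlrun : ∀ i < ℓ, (G.toPreGraph.derived (X ∪ Y ∪ Z)).und (gg i) (gg (i+1)) := by
        intro i hi
        have hmin := Nat.find_min hlex hi
        push_neg at hmin
        exact hmin.2
      have hlle : ℓ ≤ nn := Nat.find_le (Or.inl rfl)
      by_cases hZrun : ∃ j, 1 ≤ j ∧ j ≤ ℓ ∧ gg j ∈ Z
      · have hwspec := Nat.find_spec hZrun
        set w := Nat.find hZrun with hwdef
        have hZbefore : ∀ j < w, gg j ∉ Z := by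
          intro j hjw hmem
          rcases Nat.eq_zero_or_pos j with h0 | h0
          · rw [h0, hgg0] at hmem
            exact haZ hmem
          · exact Nat.find_min hZrun hjw ⟨h0, by omega, hmem⟩
        obtain ⟨τ, h1, h2, h3⟩ := PreGraph.occ_patch hE hσopen hρopen hj
          ho1 hp hSF hundσ' (by omega) hSB hundρ' hwspec.1 hgg0
          (fun i hi => hlrun i (by omega)) hZbefore hwspec.2.2
        exact contra1 τ h1 (by rw [h2]; exact hσ0) h3
      · push_neg at hZrun
        have hZrun' : ∀ j ≤ ℓ, gg j ∉ Z := by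
          intro j hjl
          rcases Nat.eq_zero_or_pos j with h0 | h0
          · rw [h0, hgg0]
            exact haZ
          · exact hZrun j h0 hjl
        set run : (G.toPreGraph.derived (X ∪ Y ∪ Z)).Route :=
          ⟨ℓ, gg, fun i hi => PreGraph.und_adj (hlrun i hi)⟩ with hrundef
        have hrunopen : run.IsZOpen Z := by
          refine PreGraph.Route.desc_open hE (fun i hi => Or.inl (hlrun i hi))
            (fun i hi => ?_) (fun i hi => hZrun' i hi)
          rintro ⟨hd', -⟩
          exact hE.ud _ _ (hlrun i (by have : i + 2 ≤ ℓ := hi; omega)) hd'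
        have hjrun : σ.nodes σ.len = run.nodes 0 := by
          rw [hj]
          exact hgg0.symm
        have hjrr : run.reverse.nodes run.reverse.len = ρ.nodes 0 := by
          rw [PreGraph.Route.reverse_nodes_last]
          exact hgg0
        have hrevund : ∀ i < run.reverse.len,
            (G.toPreGraph.derived (X ∪ Y ∪ Z)).und (run.reverse.nodes i)
              (run.reverse.nodes (i+1)) := by
          intro i hi
          have hi' : i < ℓ := hi
          show (G.toPreGraph.derived (X ∪ Y ∪ Z)).und (gg (ℓ - i)) (gg (ℓ - (i+1)))
          rw [show ℓ - i = (ℓ - (i+1)) + 1 by omega]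
          exact PreGraph.und_symm (hlrun (ℓ - (i+1)) (by omega))
        rcases Nat.eq_or_lt_of_le hlle with heq | hlt
        · -- all-undirected descent reaching X ∪ Y
          have hgU' : gg ℓ ∈ X ∨ gg ℓ ∈ Y ∨ gg ℓ ∈ Z := by
            rw [heq]
            rcases Finset.mem_union.mp hgU with h' | h'
            · rcases Finset.mem_union.mp h' with h'' | h''
              · exact Or.inl h''
              · exact Or.inr (Or.inl h'')
            · exact Or.inr (Or.inr h')
          have hgnXY : gg ℓ ∈ X ∨ gg ℓ ∈ Y := by
            rcases hgU' with h1 | h1 | h1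
            · exact Or.inl h1
            · exact Or.inr h1
            · exact absurd h1 (hZrun' ℓ le_rfl)
          rcases hgnXY with hXc | hYc
          · refine contra1 (run.reverse.append ρ hjrr) ?_ ?_ ?_
            · exact PreGraph.Route.append_open_undL hE hjrr
                (PreGraph.Route.reverse_open hrunopen) hρopen haZ hrevund hnd2
            · rw [PreGraph.Route.append_nodes_zero, PreGraph.Route.reverse_nodes_zero]
              exact hXc
            · rw [PreGraph.Route.append_nodes_last]
          · refine contra2 (σ.append run hjrun) ?_ ?_ ?_
            · refine PreGraph.Route.append_open_undR hE hjrun hσopen hrunopen ?_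
                (fun i hi => hlrun i hi) hnd1
              show gg 0 ∉ Z
              rw [hgg0]
              exact haZ
            · rw [PreGraph.Route.append_nodes_zero]
              exact hσ0
            · rw [PreGraph.Route.append_nodes_last]
              exact hYc
        · -- the run ends with a directed edge: assemble from there
          have hstepdir : (G.toPreGraph.derived (X ∪ Y ∪ Z)).solid (gg ℓ) (gg (ℓ+1)) ∨
              (G.toPreGraph.derived (X ∪ Y ∪ Z)).dashed (gg ℓ) (gg (ℓ+1)) := by
            have hnu : ¬ (G.toPreGraph.derived (X ∪ Y ∪ Z)).und (gg ℓ) (gg (ℓ+1)) := by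
              rcases hlspec with h1 | h1
              · exact absurd h1 (by omega)
              · exact h1
            rcases hgfwd ℓ hlt with h | h | h
            · exact absurd h hnu
            · exact Or.inl h
            · exact Or.inr h
          have hP1open : (σ.append run hjrun).IsZOpen Z := by
            refine PreGraph.Route.append_open_undR hE hjrun hσopen hrunopen ?_
              (fun i hi => hlrun i hi) hnd1
            show gg 0 ∉ Z
            rw [hgg0]
            exact haZ
          have hθρopen : (run.reverse.append ρ hjrr).IsZOpen Z :=
            PreGraph.Route.append_open_undL hE hjrr
              (PreGraph.Route.reverse_open hrunopen) hρopen haZ hrevund hnd2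
          have hjP : (σ.append run hjrun).nodes (σ.append run hjrun).len =
              (run.reverse.append ρ hjrr).nodes 0 := by
            rw [PreGraph.Route.append_nodes_last, PreGraph.Route.append_nodes_zero,
              PreGraph.Route.reverse_nodes_zero]
          have hgℓZ : gg ℓ ∉ Z := hZrun' ℓ le_rfl
          rcases PreGraph.assemble hE hP1open hθρopen hjP
            (by rw [PreGraph.Route.append_nodes_zero, PreGraph.Route.reverse_nodes_zero]
                exact hgℓZ)
            (by rw [PreGraph.Route.append_nodes_zero]; exact hσ0)
            (g := fun i => gg (ℓ + i)) (n := nn - ℓ) (by omega)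
            (by rw [PreGraph.Route.append_nodes_zero, PreGraph.Route.reverse_nodes_zero]
                show gg (ℓ + 0) = _
                rw [Nat.add_zero])
            (fun i hi => hgfwd (ℓ + i) (by omega))
            (fun i hi => hgdu (ℓ + i) (by omega))
            hstepdir
            (by show gg (ℓ + (nn - ℓ)) ∈ X ∨ gg (ℓ + (nn - ℓ)) ∈ Y ∨ gg (ℓ + (nn - ℓ)) ∈ Z
                rw [show ℓ + (nn - ℓ) = nn by omega]
                rcases Finset.mem_union.mp hgU with h' | h'
                · rcases Finset.mem_union.mp h' with h'' | h''
                  · exact Or.inl h''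
                  · exact Or.inr (Or.inl h'')
                · exact Or.inr (Or.inr h'))
            with ⟨τ, h1, h2, h3⟩ | ⟨τ, h1, h2, h3⟩
          · refine contra1 τ h1 h2 ?_
            rw [h3, PreGraph.Route.append_nodes_last]
          · exact contra2 τ h1 h2 h3
  rintro ⟨ρ0, hend, hopen⟩
  rcases hend with ⟨h1, h2⟩ | ⟨h1, h2⟩
  · exact key ρ0 hopen h1 h2
  · refine key ρ0.reverse (PreGraph.Route.reverse_open hopen) ?_ ?_
    · rw [PreGraph.Route.reverse_nodes_zero]
      exact h2
    · rw [PreGraph.Route.reverse_nodes_last]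
      exact h1
end
end
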